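/- arXiv:1205.5197 — 6 statements merged into one kernel-verified Lean document; each statement's English description precedes it below -/
import Mathlib

section
/- The B-orbits of 2-nilpotent n×n complex matrices under conjugation by the Borel subgroup B of upper triangular invertible matrices are in bijection with oriented link patterns of size n, i.e., with oriented graphs on vertices {1,…,n} in which every vertex is incident to at most one arrow. In particular, the number of B-orbits in the variety of 2-nilpotent n×n matrices is finite. -/
open Matrix

/-- The variety of 2-nilpotent `n × n` complex matrices. -/
def TwoNilpotent (n : ℕ) : Type := {N : Matrix (Fin n) (Fin n) ℂ // N ^ 2 = 0}

/-- The relation of being conjugate under the Borel subgroup `B` of invertible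
upper triangular matrices. -/
def BorelConj (n : ℕ) (N N' : TwoNilpotent n) : Prop :=
  ∃ b : Matrix (Fin n) (Fin n) ℂ, IsUnit b ∧ (∀ i j : Fin n, j < i → b i j = 0) ∧
    b * N.1 * b⁻¹ = N'.1

/-- Oriented link patterns of size `n`: loopless directed graphs on `{1,…,n}`
in which every vertex is incident to at most one arrow. -/
def OrientedLinkPattern (n : ℕ) : Type :=
  {A : Finset (Fin n × Fin n) //
    (∀ a ∈ A, a.1 ≠ a.2) ∧
    ∀ v : Fin n, (A.filter (fun a => a.1 = v ∨ a.2 = v)).card ≤ 1}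

/-!
Write `pivot v` for the index of the last nonzero coordinate of `v`, so that `v` has pivot `i`
exactly when it lies in `span (e k : k ≤ i)` but not in `span (e k : k < i)`. Invertible
upper triangular matrices preserve pivots, hence the least pivot of `N v` over all `v` of pivot `j`
is invariant under `B`-conjugation of `N`. Recording an arrow `j → i` whenever this least pivot is
`i` gives an oriented link pattern: two arrows `j → i`, `j' → i` with `j < j'` are impossible,
since subtracting a multiple of the minimiser for `j` from the one for `j'` would lower the pivot
of its image, and `N² = 0` prevents the target of an arrow from being a source. For the matrix of
a pattern this recovers the pattern. Conversely, the minimisers, with the one for the target `i` of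
an arrow `j → i` replaced by `N v_j`, form a basis adapted to the flag on which `N` acts by the
pattern matrix. So every `B`-orbit contains exactly one pattern matrix.
-/

theorem Matrix.BlockTriangular.nonsing_inv {m R α : Type*} [Fintype m] [DecidableEq m]
    [CommRing R] [LinearOrder α] {b : m → α} {M : Matrix m m R} (hM : M.BlockTriangular b) :
    M⁻¹.BlockTriangular b := by
  by_cases h : IsUnit M.det
  · have := M.invertibleOfIsUnitDet h
    exact blockTriangular_inv_of_blockTriangular hM
  · rw [nonsing_inv_apply_not_isUnit M h]
    exact blockTriangular_zero

section Pivot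

variable {ι K : Type*} [LinearOrder ι] [Fintype ι]

section Zero

variable [Zero K] {v : ι → K} {i : ι}

open Classical in
noncomputable def pivot (v : ι → K) : WithBot ι := (Finset.univ.filter fun i => v i ≠ 0).max

theorem le_pivot (h : v i ≠ 0) : (i : WithBot ι) ≤ pivot v :=
  Finset.le_max (by simpa using h)

theorem ne_zero_of_pivot_eq (h : pivot v = i) : v i ≠ 0 := by
  simpa using Finset.mem_of_max h

theorem pivot_le_iff : pivot v ≤ i ↔ ∀ k, i < k → v k = 0 := by
  refine ⟨fun h k hik => by_contra fun hk => ?_, fun h => ?_⟩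
  · exact (WithBot.coe_lt_coe.2 hik).not_ge ((le_pivot hk).trans h)
  · simp only [pivot, Finset.max_le_iff, Finset.mem_filter, Finset.mem_univ, true_and,
      WithBot.coe_le_coe]
    exact fun k hk => not_lt.1 fun hik => hk (h k hik)

theorem pivot_lt_iff : pivot v < i ↔ ∀ k, i ≤ k → v k = 0 := by
  refine ⟨fun h k hik => by_contra fun hk => ?_, fun h => ?_⟩
  · exact (WithBot.coe_le_coe.2 hik).not_gt ((le_pivot hk).trans_lt h)
  · induction hv : pivot v using WithBot.recBotCoe with
    | bot => exact WithBot.bot_lt_coe i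
    | coe k => exact WithBot.coe_lt_coe.2 (not_le.1 fun hik => ne_zero_of_pivot_eq hv (h k hik))

theorem pivot_eq_coe_iff : pivot v = i ↔ v i ≠ 0 ∧ ∀ k, i < k → v k = 0 :=
  ⟨fun h => ⟨ne_zero_of_pivot_eq h, pivot_le_iff.1 h.le⟩,
    fun h => le_antisymm (pivot_le_iff.2 h.2) (le_pivot h.1)⟩

theorem pivot_eq_bot_iff : pivot v = ⊥ ↔ v = 0 := by
  simp [pivot, Finset.max_eq_bot, Finset.filter_eq_empty_iff, funext_iff]

@[simp]
theorem pivot_zero : pivot (0 : ι → K) = ⊥ := pivot_eq_bot_iff.2 rfl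

theorem pivot_single {c : K} (hc : c ≠ 0) : pivot (Pi.single i c) = i :=
  pivot_eq_coe_iff.2 ⟨by simpa using hc, fun _ hk => by simp [hk.ne']⟩

end Zero

section CommRing

variable [CommRing K] {v w : ι → K} {i : ι}

theorem pivot_smul_le (c : K) (v : ι → K) : pivot (c • v) ≤ pivot v := by
  induction hv : pivot v using WithBot.recBotCoe with
  | bot => simp [pivot_eq_bot_iff.1 hv]
  | coe i => exact pivot_le_iff.2 fun k hk => by simp [pivot_le_iff.1 hv.le k hk]

theorem pivot_sub_of_lt (hv : pivot v = i) (hw : pivot w < i) : pivot (v - w) = i := by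
  rw [pivot_eq_coe_iff] at hv ⊢
  rw [pivot_lt_iff] at hw
  refine ⟨by simpa [hw i le_rfl] using hv.1, fun k hk => ?_⟩
  simp [hv.2 k hk, hw k hk.le]

theorem pivot_mulVec_le {b : Matrix ι ι K} (hb : b.IsUpperTriangular) (v : ι → K) :
    pivot (b *ᵥ v) ≤ pivot v := by
  induction hv : pivot v using WithBot.recBotCoe with
  | bot => simp [pivot_eq_bot_iff.1 hv]
  | coe i =>
    refine pivot_le_iff.2 fun k hik => Finset.sum_eq_zero fun t _ => ?_
    rcases le_or_gt t i with hti | hit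
    · simp [hb (hti.trans_lt hik)]
    · simp [pivot_le_iff.1 hv.le t hit]

theorem pivot_mulVec {b : Matrix ι ι K} (hb : b.IsUpperTriangular) (hu : IsUnit b)
    (v : ι → K) : pivot (b *ᵥ v) = pivot v := by
  refine le_antisymm (pivot_mulVec_le hb v) ?_
  calc pivot v = pivot (b⁻¹ *ᵥ (b *ᵥ v)) := by
        rw [mulVec_mulVec, nonsing_inv_mul _ ((isUnit_iff_isUnit_det b).1 hu), one_mulVec]
    _ ≤ pivot (b *ᵥ v) := pivot_mulVec_le hb.nonsing_inv _

end CommRing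

theorem pivot_sub_smul_lt [Field K] {v w : ι → K} {i : ι} (hv : pivot v = i)
    (hw : pivot w = i) : pivot (v - (v i / w i) • w) < i := by
  rw [pivot_eq_coe_iff] at hv hw
  refine pivot_lt_iff.2 fun k hk => ?_
  rcases hk.lt_or_eq with hk | rfl
  · simp [hv.2 k hk, hw.2 k hk]
  · simp [div_mul_cancel₀ _ hw.1]

end Pivot

section MinImagePivot

variable {ι K : Type*} [LinearOrder ι] [Fintype ι] [Field K] (N : Matrix ι ι K) {i j : ι}

noncomputable def minImagePivotVec (j : ι) : ι → K :=
  Function.argminOn (fun v => pivot (N *ᵥ v)) {v | pivot v = j}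
    ⟨Pi.single j 1, pivot_single one_ne_zero⟩

noncomputable def minImagePivot (j : ι) : WithBot ι := pivot (N *ᵥ minImagePivotVec N j)

theorem pivot_minImagePivotVec (j : ι) : pivot (minImagePivotVec N j) = j :=
  Function.argminOn_mem (fun v => pivot (N *ᵥ v)) {v | pivot v = j} _

variable {N}

theorem minImagePivot_le {v : ι → K} (hv : pivot v = j) :
    minImagePivot N j ≤ pivot (N *ᵥ v) :=
  Function.argminOn_le (fun v => pivot (N *ᵥ v)) {v | pivot v = j} (a := v) hv

theorem minImagePivot_eq_of_forall_le {v : ι → K} (hv : pivot v = j)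
    (h : ∀ u, pivot u = j → pivot (N *ᵥ v) ≤ pivot (N *ᵥ u)) :
    minImagePivot N j = pivot (N *ᵥ v) :=
  le_antisymm (minImagePivot_le hv) (h _ (pivot_minImagePivotVec N j))

theorem minImagePivot_conj {b : Matrix ι ι K} (hb : b.IsUpperTriangular) (hu : IsUnit b)
    (j : ι) : minImagePivot (b * N * b⁻¹) j = minImagePivot N j := by
  have hpiv : ∀ v, pivot ((b * N * b⁻¹) *ᵥ v) = pivot (N *ᵥ (b⁻¹ *ᵥ v)) := fun v => by
    rw [Matrix.mul_assoc, ← mulVec_mulVec, pivot_mulVec hb hu, mulVec_mulVec]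
  have hv : b⁻¹ *ᵥ (b *ᵥ minImagePivotVec N j) = minImagePivotVec N j := by
    rw [mulVec_mulVec, nonsing_inv_mul _ ((isUnit_iff_isUnit_det b).1 hu), one_mulVec]
  rw [minImagePivot_eq_of_forall_le (v := b *ᵥ minImagePivotVec N j)
    (by rw [pivot_mulVec hb hu, pivot_minImagePivotVec]) fun u hu_j => ?_, hpiv, hv]
  · rfl
  rw [hpiv, hpiv, hv]
  exact minImagePivot_le (by rwa [pivot_mulVec hb.nonsing_inv (isUnit_nonsing_inv_iff.2 hu)])

theorem minImagePivot_eq_bot_of_eq_coe (hN : N * N = 0) (h : minImagePivot N j = i) :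
    minImagePivot N i = ⊥ :=
  le_bot_iff.1 <| (minImagePivot_le h).trans <| by simp [mulVec_mulVec, hN]

theorem minImagePivot_ne_of_lt {j' : ι} (hlt : j < j') (h : minImagePivot N j = i) :
    minImagePivot N j' ≠ i := by
  intro h'
  set v := minImagePivotVec N j
  set v' := minImagePivotVec N j'
  have hpiv : pivot (v' - ((N *ᵥ v') i / (N *ᵥ v) i) • v) = j' :=
    pivot_sub_of_lt (pivot_minImagePivotVec N j') <| (pivot_smul_le _ _).trans_lt <| by
      rw [pivot_minImagePivotVec]
      exact WithBot.coe_lt_coe.2 hlt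
  have hlow : pivot (N *ᵥ (v' - ((N *ᵥ v') i / (N *ᵥ v) i) • v)) < i := by
    rw [mulVec_sub, mulVec_smul]
    exact pivot_sub_smul_lt h' h
  exact ((minImagePivot_le hpiv).trans_lt hlow).ne h'

theorem eq_of_minImagePivot_eq_coe {j' : ι} (h : minImagePivot N j = i)
    (h' : minImagePivot N j' = i) : j = j' := by
  rcases lt_trichotomy j j' with hlt | rfl | hlt
  · exact (minImagePivot_ne_of_lt hlt h h').elim
  · rfl
  · exact (minImagePivot_ne_of_lt hlt h' h).elim

end MinImagePivot

section LinkPattern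

variable {ι K : Type*} [DecidableEq ι] {A : Finset (ι × ι)} {i i' j j' k : ι}

def IsOrientedLinkPattern (A : Finset (ι × ι)) : Prop :=
  (∀ a ∈ A, a.1 ≠ a.2) ∧ ∀ v : ι, (A.filter (fun a => a.1 = v ∨ a.2 = v)).card ≤ 1

namespace IsOrientedLinkPattern

theorem eq_of_incident (hA : IsOrientedLinkPattern A) {a b : ι × ι} (ha : a ∈ A) (hb : b ∈ A)
    (v : ι) (hav : a.1 = v ∨ a.2 = v) (hbv : b.1 = v ∨ b.2 = v) : a = b :=
  Finset.card_le_one.1 (hA.2 v) a (by simp [ha, hav]) b (by simp [hb, hbv])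

theorem fst_eq (hA : IsOrientedLinkPattern A) (h : (i, j) ∈ A) (h' : (i', j) ∈ A) : i = i' :=
  congrArg Prod.fst (hA.eq_of_incident h h' j (.inr rfl) (.inr rfl))

theorem snd_eq (hA : IsOrientedLinkPattern A) (h : (i, j) ∈ A) (h' : (i, j') ∈ A) : j = j' :=
  congrArg Prod.snd (hA.eq_of_incident h h' i (.inl rfl) (.inl rfl))

theorem notMem_of_mem (hA : IsOrientedLinkPattern A) (h : (i, k) ∈ A) : (k, j) ∉ A :=
  fun h' => hA.1 _ h (congrArg Prod.fst (hA.eq_of_incident h h' k (.inr rfl) (.inl rfl)))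

end IsOrientedLinkPattern

theorem IsOrientedLinkPattern.of_forall
    (hfst : ∀ i i' j, (i, j) ∈ A → (i', j) ∈ A → i = i')
    (hsnd : ∀ i j j', (i, j) ∈ A → (i, j') ∈ A → j = j')
    (hchain : ∀ i k j, (i, k) ∈ A → (k, j) ∉ A) : IsOrientedLinkPattern A := by
  refine ⟨?_, fun v => Finset.card_le_one.2 ?_⟩
  · rintro ⟨i, j⟩ h (rfl : i = j)
    exact hchain i i i h h
  rintro ⟨i, j⟩ ha ⟨i', j'⟩ hb
  simp only [Finset.mem_filter] at ha hb
  rcases ha with ⟨ha, rfl | rfl⟩ <;> rcases hb with ⟨hb, h | h⟩ <;> subst h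
  · rw [hsnd _ _ _ ha hb]
  · exact (hchain _ _ _ hb ha).elim
  · exact (hchain _ _ _ ha hb).elim
  · rw [hfst _ _ _ ha hb]

variable [Fintype ι] [Semiring K]

/-- `(i, j) ∈ A` is the arrow `j → i`: `patternMatrix A` maps `e j` to `e i`. -/
def patternMatrix (A : Finset (ι × ι)) : Matrix ι ι K :=
  of fun i j => if (i, j) ∈ A then 1 else 0

theorem patternMatrix_mulVec_apply (hA : IsOrientedLinkPattern A) (h : (i, j) ∈ A)
    (v : ι → K) : (patternMatrix A *ᵥ v) i = v j := by
  refine (Finset.sum_eq_single j (fun t _ ht => ?_) (by simp)).trans (by simp [patternMatrix, h])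
  have : (i, t) ∉ A := fun h' => ht (hA.snd_eq h' h)
  simp [patternMatrix, this]

theorem patternMatrix_mulVec_single (hA : IsOrientedLinkPattern A) (h : (i, j) ∈ A) :
    patternMatrix A *ᵥ Pi.single j 1 = (Pi.single i 1 : ι → K) := by
  ext k
  rw [mulVec_single_one]
  by_cases hk : k = i
  · simp [patternMatrix, hk, h]
  · have : (k, j) ∉ A := fun h' => hk (hA.fst_eq h' h)
    simp [patternMatrix, hk, this]

theorem patternMatrix_mulVec_single_of_forall_notMem (h : ∀ i, (i, j) ∉ A) :
    patternMatrix A *ᵥ Pi.single j 1 = (0 : ι → K) := by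
  ext k
  simp [patternMatrix, h k]

theorem patternMatrix_mul_self (hA : IsOrientedLinkPattern A) :
    patternMatrix A * patternMatrix A = (0 : Matrix ι ι K) := by
  ext i j
  refine Finset.sum_eq_zero fun k _ => ?_
  by_cases h : (i, k) ∈ A
  · simp [patternMatrix, hA.notMem_of_mem h]
  · simp [patternMatrix, h]

end LinkPattern

section NormalForm

variable {ι K : Type*} [LinearOrder ι] [Fintype ι] [Field K] {N : Matrix ι ι K}
  {A : Finset (ι × ι)} {i j k : ι}

noncomputable def pivotPattern (N : Matrix ι ι K) : Finset (ι × ι) :=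
  Finset.univ.filter fun p => minImagePivot N p.2 = p.1

@[simp]
theorem mem_pivotPattern : (i, j) ∈ pivotPattern N ↔ minImagePivot N j = i := by
  simp [pivotPattern]

theorem pivotPattern_conj {b : Matrix ι ι K} (hb : b.IsUpperTriangular) (hu : IsUnit b) :
    pivotPattern (b * N * b⁻¹) = pivotPattern N := by
  ext ⟨i, j⟩
  simp [minImagePivot_conj hb hu]

theorem isOrientedLinkPattern_pivotPattern (hN : N * N = 0) :
    IsOrientedLinkPattern (pivotPattern N) := by
  refine .of_forall (fun i i' j h h' => ?_) (fun i j j' h h' => ?_) (fun i k j h h' => ?_)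
  · rw [mem_pivotPattern] at h h'
    exact WithBot.coe_injective (h.symm.trans h')
  · exact eq_of_minImagePivot_eq_coe (mem_pivotPattern.1 h) (mem_pivotPattern.1 h')
  · rw [mem_pivotPattern] at h h'
    simp [minImagePivot_eq_bot_of_eq_coe hN h'] at h

theorem minImagePivot_patternMatrix_of_mem (hA : IsOrientedLinkPattern A) (h : (i, j) ∈ A) :
    minImagePivot (patternMatrix A : Matrix ι ι K) j = i := by
  have hj : pivot (Pi.single j (1 : K)) = j := pivot_single one_ne_zero
  rw [minImagePivot_eq_of_forall_le hj fun u hu => ?_] <;>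
    rw [patternMatrix_mulVec_single hA h, pivot_single one_ne_zero]
  exact le_pivot (by rw [patternMatrix_mulVec_apply hA h]; exact ne_zero_of_pivot_eq hu)

theorem minImagePivot_patternMatrix_of_forall_notMem (h : ∀ i, (i, j) ∉ A) :
    minImagePivot (patternMatrix A : Matrix ι ι K) j = ⊥ :=
  le_bot_iff.1 <| (minImagePivot_le (pivot_single one_ne_zero)).trans <| by
    rw [patternMatrix_mulVec_single_of_forall_notMem h, pivot_zero]

theorem pivotPattern_patternMatrix (hA : IsOrientedLinkPattern A) :
    pivotPattern (patternMatrix A : Matrix ι ι K) = A := by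
  ext ⟨i, j⟩
  rw [mem_pivotPattern]
  by_cases h : ∃ i', (i', j) ∈ A
  · obtain ⟨i', h'⟩ := h
    rw [minImagePivot_patternMatrix_of_mem hA h', WithBot.coe_inj]
    exact ⟨fun e => e ▸ h', hA.fst_eq h'⟩
  · simp only [not_exists] at h
    simp [minImagePivot_patternMatrix_of_forall_notMem h, h i]

variable (N) in
open Classical in
noncomputable def flagBasis (i : ι) : ι → K :=
  if h : ∃ j, minImagePivot N j = i then N *ᵥ minImagePivotVec N h.choose
  else minImagePivotVec N i

variable (N) in
theorem pivot_flagBasis (i : ι) : pivot (flagBasis N i) = i := by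
  rw [flagBasis]
  split_ifs with h
  · exact h.choose_spec
  · exact pivot_minImagePivotVec N i

theorem mulVec_flagBasis_of_eq_coe (hN : N * N = 0) (h : minImagePivot N i = k) :
    N *ᵥ flagBasis N i = flagBasis N k := by
  have hi : ¬∃ j, minImagePivot N j = i := fun ⟨j, hj⟩ => by
    simp [minImagePivot_eq_bot_of_eq_coe hN hj] at h
  have hk : ∃ j, minImagePivot N j = k := ⟨i, h⟩
  rw [flagBasis, dif_neg hi, flagBasis, dif_pos hk, eq_of_minImagePivot_eq_coe hk.choose_spec h]

theorem mulVec_flagBasis_of_eq_bot (hN : N * N = 0) (h : minImagePivot N i = ⊥) :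
    N *ᵥ flagBasis N i = 0 := by
  rw [flagBasis]
  split_ifs
  · rw [mulVec_mulVec, hN, zero_mulVec]
  · exact pivot_eq_bot_iff.1 h

theorem exists_isUpperTriangular_mul_eq_mul_patternMatrix (hN : N * N = 0) :
    ∃ B : Matrix ι ι K, B.IsUpperTriangular ∧ IsUnit B ∧
      N * B = B * patternMatrix (pivotPattern N) := by
  let B : Matrix ι ι K := of fun k i => flagBasis N i k
  have hB : ∀ i, B *ᵥ Pi.single i 1 = flagBasis N i := fun i => by
    ext k
    simp [B]
  have htri : B.IsUpperTriangular := fun k i hik =>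
    pivot_le_iff.1 (pivot_flagBasis N i).le k hik
  refine ⟨B, htri, (isUnit_iff_isUnit_det B).2 ?_, ext_of_mulVec_single fun i => ?_⟩
  · rw [det_of_isUpperTriangular htri, isUnit_iff_ne_zero, Finset.prod_ne_zero_iff]
    exact fun i _ => (ne_zero_of_pivot_eq (pivot_flagBasis N i) : flagBasis N i i ≠ 0)
  rw [← mulVec_mulVec, ← mulVec_mulVec, hB]
  induction h : minImagePivot N i using WithBot.recBotCoe with
  | bot =>
    rw [mulVec_flagBasis_of_eq_bot hN h,
      patternMatrix_mulVec_single_of_forall_notMem (by simp [h]), mulVec_zero]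
  | coe k =>
    rw [mulVec_flagBasis_of_eq_coe hN h,
      patternMatrix_mulVec_single (isOrientedLinkPattern_pivotPattern hN) (mem_pivotPattern.2 h),
      hB]

end NormalForm

section BorelOrbits

variable {n : ℕ}

theorem TwoNilpotent.mul_self_eq_zero (N : TwoNilpotent n) : N.1 * N.1 = 0 := by
  rw [← sq]
  exact N.2

noncomputable def TwoNilpotent.linkPattern (N : TwoNilpotent n) : OrientedLinkPattern n :=
  ⟨pivotPattern N.1, isOrientedLinkPattern_pivotPattern N.mul_self_eq_zero⟩

def OrientedLinkPattern.toTwoNilpotent (A : OrientedLinkPattern n) : TwoNilpotent n :=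
  ⟨patternMatrix A.1, by rw [sq]; exact patternMatrix_mul_self A.2⟩

theorem TwoNilpotent.linkPattern_eq_of_borelConj {N N' : TwoNilpotent n}
    (h : BorelConj n N N') : N.linkPattern = N'.linkPattern := by
  obtain ⟨b, hu, hb, hN'⟩ := h
  exact Subtype.ext (by simp only [linkPattern, ← hN', pivotPattern_conj hb hu])

theorem TwoNilpotent.borelConj_linkPattern (N : TwoNilpotent n) :
    BorelConj n N N.linkPattern.toTwoNilpotent := by
  obtain ⟨B, hB, hu, hNB⟩ :=
    exists_isUpperTriangular_mul_eq_mul_patternMatrix N.mul_self_eq_zero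
  have hdet := (isUnit_iff_isUnit_det B).1 hu
  refine ⟨B⁻¹, isUnit_nonsing_inv_iff.2 hu, hB.nonsing_inv, ?_⟩
  rw [nonsing_inv_nonsing_inv _ hdet, Matrix.mul_assoc, hNB, ← Matrix.mul_assoc,
    nonsing_inv_mul _ hdet, Matrix.one_mul]
  rfl

theorem OrientedLinkPattern.linkPattern_toTwoNilpotent (A : OrientedLinkPattern n) :
    A.toTwoNilpotent.linkPattern = A :=
  Subtype.ext (pivotPattern_patternMatrix A.2)

noncomputable def borelOrbitEquiv (n : ℕ) : Quot (BorelConj n) ≃ OrientedLinkPattern n where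
  toFun := Quot.lift TwoNilpotent.linkPattern fun _ _ => TwoNilpotent.linkPattern_eq_of_borelConj
  invFun A := Quot.mk _ A.toTwoNilpotent
  left_inv := Quot.ind fun N => (Quot.sound N.borelConj_linkPattern).symm
  right_inv := OrientedLinkPattern.linkPattern_toTwoNilpotent

instance : Finite (OrientedLinkPattern n) := Subtype.finite

end BorelOrbits

/-- The `B`-orbits of 2-nilpotent `n × n` complex matrices are in bijection with
oriented link patterns of size `n`; in particular there are finitely many orbits. -/
theorem borel_orbits_two_nilpotent_equiv_olp (n : ℕ) :
    Nonempty (Quot (BorelConj n) ≃ OrientedLinkPattern n) ∧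
      Finite (Quot (BorelConj n)) :=
  ⟨⟨borelOrbitEquiv n⟩, .of_equiv _ (borelOrbitEquiv n).symm⟩
end

section
/- For the indecomposable representations V_k and U_{i,j} of the bound quiver (Q_p, α²=0), one has dim Hom(V_k, V_i) = dim Hom(V_k, U_{i,j}) = δ_{i≤k} and dim Hom(U_{k,l}, V_i) = δ_{i≤l}. -/
open Matrix

/-- Dimension vector of the indecomposable `U_{i,j}` of the bound quiver
`(Q_p, α² = 0)` (vertices `1,…,p`). -/
def UDim (p i j : ℕ) : ℕ → ℕ := fun k =>
  if 1 ≤ k ∧ k ≤ p then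
    (if k < min i j then 0 else if k < max i j then 1 else 2) else 0

/-- Dimension vector of the indecomposable `V_i`: `0` below `i`, `1` from `i` on. -/
def VDim (p i : ℕ) : ℕ → ℕ := fun k => if 1 ≤ k ∧ k ≤ p ∧ i ≤ k then 1 else 0

/-- Structure maps of `U_{i,j}` along the arrows `k → k+1`. -/
def UMap (p i j k : ℕ) : Matrix (Fin (UDim p i j (k + 1))) (Fin (UDim p i j k)) ℂ :=
  Matrix.of fun r c =>
    if (r : ℕ) = (c : ℕ) + (if i < j ∧ k + 1 = max i j then 1 else 0) then 1 else 0

/-- Structure maps of `V_i` along the arrows `k → k+1` (identities). -/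
def VMap (p i k : ℕ) : Matrix (Fin (VDim p i (k + 1))) (Fin (VDim p i k)) ℂ :=
  Matrix.of fun r c => if (r : ℕ) = (c : ℕ) then 1 else 0

/-- The loop `α` acting on `K^m`: `α e₁ = e₂`, `α e₂ = 0` (zero for `m ≤ 1`). -/
def LoopMat (m : ℕ) : Matrix (Fin m) (Fin m) ℂ :=
  Matrix.of fun r c => if (r : ℕ) = (c : ℕ) + 1 then 1 else 0

/-- Homomorphism space between two representations of the bound quiver
`(Q_p, α² = 0)`. -/
noncomputable def HomSpace (p : ℕ) (d d' : ℕ → ℕ)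
    (A : ∀ k : ℕ, Matrix (Fin (d (k + 1))) (Fin (d k)) ℂ)
    (A' : ∀ k : ℕ, Matrix (Fin (d' (k + 1))) (Fin (d' k)) ℂ)
    (L : Matrix (Fin (d p)) (Fin (d p)) ℂ)
    (L' : Matrix (Fin (d' p)) (Fin (d' p)) ℂ) :
    Submodule ℂ (∀ k : ℕ, Matrix (Fin (d' k)) (Fin (d k)) ℂ) where
  carrier := {f | (∀ k, 1 ≤ k → k < p → f (k + 1) * A k = A' k * f k) ∧
    f p * L = L' * f p}
  add_mem' := by
    intro f g hf hg
    refine ⟨fun k hk1 hk2 => ?_, ?_⟩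
    · simp only [Pi.add_apply, Matrix.add_mul, Matrix.mul_add,
        hf.1 k hk1 hk2, hg.1 k hk1 hk2]
    · simp only [Pi.add_apply, Matrix.add_mul, Matrix.mul_add, hf.2, hg.2]
  zero_mem' := by constructor <;> simp
  smul_mem' := by
    intro c f hf
    refine ⟨fun k hk1 hk2 => ?_, ?_⟩
    · simp only [Pi.smul_apply, Matrix.smul_mul, Matrix.mul_smul, hf.1 k hk1 hk2]
    · simp only [Pi.smul_apply, Matrix.smul_mul, Matrix.mul_smul, hf.2]

/-!
Every structure map in sight (the arrows of `V_i` and `U_{i,j}`, and the loop) is a shift matrix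
`e_c ↦ e_{c+t}`, so a family `f` is a homomorphism iff its entries satisfy
`f_{m+1}[r, s + t_m] = f_m[r - t'_m, s]` (read as `0` for `r < t'_m`), plus the analogous relation
for the loop at `p`. The arrows of the targets `V_i` and `U_{i,j}` are injective, so a
homomorphism is determined by its component at `p`, a matrix with at most two entries. The loop
relation kills one of them when there are two; the remaining one is realised by an explicit
homomorphism when `i ≤ k` (resp. `i ≤ l`), and otherwise it vanishes because it can be transported
along unshifted arrows down to a vertex where the target is zero.
-/

section ShiftMatrix

variable {R : Type*}

def shiftMatrix [Zero R] [One R] (a b t : ℕ) : Matrix (Fin a) (Fin b) R :=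
  Matrix.of fun r c => if (r : ℕ) = (c : ℕ) + t then 1 else 0

def entryOrZero [Zero R] {a b : ℕ} (X : Matrix (Fin a) (Fin b) R) (r c : ℕ) : R :=
  if h : r < a ∧ c < b then X ⟨r, h.1⟩ ⟨c, h.2⟩ else 0

section Entries

variable [Zero R] {a b : ℕ}

@[simp]
lemma entryOrZero_fin (X : Matrix (Fin a) (Fin b) R) (r : Fin a) (c : Fin b) :
    entryOrZero X r c = X r c := by
  rw [entryOrZero, dif_pos ⟨r.isLt, c.isLt⟩]

@[simp]
lemma entryOrZero_zero (r c : ℕ) : entryOrZero (0 : Matrix (Fin a) (Fin b) R) r c = 0 := by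
  unfold entryOrZero
  split_ifs <;> rfl

lemma entryOrZero_of_not_lt (X : Matrix (Fin a) (Fin b) R) {r c : ℕ} (h : ¬(r < a ∧ c < b)) :
    entryOrZero X r c = 0 :=
  dif_neg h

lemma Matrix.ext_entryOrZero {X Y : Matrix (Fin a) (Fin b) R}
    (h : ∀ r < a, ∀ c < b, entryOrZero X r c = entryOrZero Y r c) : X = Y := by
  ext r c
  simpa using h r r.isLt c c.isLt

end Entries

lemma entryOrZero_smul [MulZeroClass R] {a b : ℕ} (x : R) (X : Matrix (Fin a) (Fin b) R)
    (r c : ℕ) : entryOrZero (x • X) r c = x * entryOrZero X r c := by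
  unfold entryOrZero
  split_ifs <;> simp

section Products

variable [NonAssocSemiring R] {a b c : ℕ}

lemma mul_shiftMatrix_apply (X : Matrix (Fin a) (Fin b) R) (t : ℕ) (r : Fin a) (s : Fin c) :
    (X * shiftMatrix (R := R) b c t) r s = entryOrZero X r (s + t) := by
  rw [Matrix.mul_apply]
  by_cases h : (s : ℕ) + t < b
  · rw [Finset.sum_eq_single_of_mem (⟨s + t, h⟩ : Fin b) (Finset.mem_univ _)]
    · simp [shiftMatrix, entryOrZero, h]
    · intro x _ hx
      simp [shiftMatrix, Fin.ext_iff.not.mp hx]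
  · rw [entryOrZero_of_not_lt _ (by tauto)]
    refine Finset.sum_eq_zero fun x _ => ?_
    simp [shiftMatrix, show (x : ℕ) ≠ s + t by omega]

lemma shiftMatrix_mul_apply (Y : Matrix (Fin b) (Fin c) R) (t : ℕ) (r : Fin a) (s : Fin c) :
    (shiftMatrix (R := R) a b t * Y) r s = if t ≤ r then entryOrZero Y (r - t) s else 0 := by
  rw [Matrix.mul_apply]
  by_cases h : t ≤ (r : ℕ) ∧ (r : ℕ) - t < b
  · rw [if_pos h.1, Finset.sum_eq_single_of_mem (⟨r - t, h.2⟩ : Fin b) (Finset.mem_univ _)]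
    · simp [shiftMatrix, entryOrZero, h.2, Nat.sub_add_cancel h.1]
    · intro x _ hx
      simp [shiftMatrix, show (r : ℕ) ≠ x + t from fun e => hx (Fin.ext (by simp; omega))]
  · rw [Finset.sum_eq_zero fun x _ => by simp [shiftMatrix, show (r : ℕ) ≠ x + t by omega]]
    split_ifs
    · rw [entryOrZero_of_not_lt _ (by tauto)]
    · rfl

lemma mul_shiftMatrix_eq_shiftMatrix_mul_iff {d : ℕ} {X : Matrix (Fin a) (Fin b) R}
    {Y : Matrix (Fin c) (Fin d) R} {t t' : ℕ} :
    X * shiftMatrix (R := R) b d t = shiftMatrix (R := R) a c t' * Y ↔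
      ∀ r < a, ∀ s < d, entryOrZero X r (s + t) =
        if t' ≤ r then entryOrZero Y (r - t') s else 0 := by
  constructor
  · intro h r hr s hs
    have := congrFun (congrFun h ⟨r, hr⟩) ⟨s, hs⟩
    rwa [mul_shiftMatrix_apply, shiftMatrix_mul_apply] at this
  · intro h
    ext r s
    rw [mul_shiftMatrix_apply, shiftMatrix_mul_apply]
    exact h r r.isLt s s.isLt

end Products

end ShiftMatrix

noncomputable def shiftHomSpace (p : ℕ) (d d' τ τ' : ℕ → ℕ) :
    Submodule ℂ (∀ m, Matrix (Fin (d' m)) (Fin (d m)) ℂ) :=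
  HomSpace p d d' (fun m => shiftMatrix _ _ (τ m)) (fun m => shiftMatrix _ _ (τ' m))
    (shiftMatrix _ _ 1) (shiftMatrix _ _ 1)

namespace shiftHomSpace

variable {p : ℕ} {d d' τ τ' : ℕ → ℕ} {f : ∀ m, Matrix (Fin (d' m)) (Fin (d m)) ℂ}

lemma mem_iff : f ∈ shiftHomSpace p d d' τ τ' ↔
    (∀ m, 1 ≤ m → m < p → ∀ r < d' (m + 1), ∀ s < d m,
      entryOrZero (f (m + 1)) r (s + τ m) =
        if τ' m ≤ r then entryOrZero (f m) (r - τ' m) s else 0) ∧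
    ∀ r < d' p, ∀ s < d p,
      entryOrZero (f p) r (s + 1) = if 1 ≤ r then entryOrZero (f p) (r - 1) s else 0 := by
  simp only [← mul_shiftMatrix_eq_shiftMatrix_mul_iff]
  rfl

lemma entryOrZero_loop (hf : f ∈ shiftHomSpace p d d' τ τ') {r s : ℕ} (hr : r < d' p)
    (hs : s < d p) :
    entryOrZero (f p) r (s + 1) = if 1 ≤ r then entryOrZero (f p) (r - 1) s else 0 :=
  (mem_iff.1 hf).2 r hr s hs

lemma entryOrZero_succ (hf : f ∈ shiftHomSpace p d d' τ τ') {m r s : ℕ} (hm : 1 ≤ m)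
    (hmp : m < p) (hr : r + τ' m < d' (m + 1)) (hs : s < d m) :
    entryOrZero (f (m + 1)) (r + τ' m) (s + τ m) = entryOrZero (f m) r s := by
  simpa using (mem_iff.1 hf).1 m hm hmp (r + τ' m) hr s hs

lemma entryOrZero_eq_of_unshifted (hf : f ∈ shiftHomSpace p d d' τ τ') {a b r s : ℕ}
    (ha : 1 ≤ a) (hab : a ≤ b) (hbp : b ≤ p)
    (h : ∀ m, a ≤ m → m < b → τ m = 0 ∧ τ' m = 0 ∧ r < d' (m + 1) ∧ s < d m) :
    entryOrZero (f b) r s = entryOrZero (f a) r s := by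
  induction b, hab using Nat.le_induction with
  | base => rfl
  | succ b hab ih =>
    obtain ⟨hτ, hτ', hr, hs⟩ := h b hab (by omega)
    have := entryOrZero_succ hf (by omega) (by omega) (by rwa [hτ', add_zero]) hs
    rw [hτ, hτ', add_zero, add_zero] at this
    rw [this, ih (by omega) fun m hm hmb => h m hm (by omega)]

-- `hinj` says that the shift matrices of the target are injective.
variable (hd' : ∀ m, m = 0 ∨ p < m → d' m = 0)
  (hinj : ∀ m, 1 ≤ m → m < p → d' m + τ' m ≤ d' (m + 1))
include hd' hinj

lemma eq_zero_of_apply_eq_zero (hf : f ∈ shiftHomSpace p d d' τ τ') (hp : f p = 0) : f = 0 := by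
  have below : ∀ m, m ≤ p → f m = 0 := by
    intro m hm
    refine Nat.decreasingInduction (fun m hmp ih => ?_) hp hm
    refine Matrix.ext_entryOrZero fun r hr s hs => ?_
    rcases Nat.eq_zero_or_pos m with rfl | hm
    · have := hd' 0 (Or.inl rfl)
      omega
    · rw [← entryOrZero_succ hf hm hmp (by have := hinj m hm hmp; omega) hs, ih]
      simp
  funext m
  by_cases hm : m ≤ p
  · exact below m hm
  · ext r
    have := hd' m (Or.inr (by omega))
    have := r.isLt
    omega

lemma finrank_eq_one {g : ∀ m, Matrix (Fin (d' m)) (Fin (d m)) ℂ}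
    (hg : g ∈ shiftHomSpace p d d' τ τ') (hgp : g p ≠ 0)
    (hspan : ∀ f ∈ shiftHomSpace p d d' τ τ', ∃ c : ℂ, f p = c • g p) :
    Module.finrank ℂ (shiftHomSpace p d d' τ τ') = 1 := by
  have hg0 : (⟨g, hg⟩ : shiftHomSpace p d d' τ τ') ≠ 0 := fun h =>
    hgp (congrFun (congrArg Subtype.val h) p)
  rw [finrank_eq_one_iff_of_nonzero' _ hg0]
  rintro ⟨f, hf⟩
  obtain ⟨c, hc⟩ := hspan f hf
  refine ⟨c, Subtype.ext ?_⟩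
  have := eq_zero_of_apply_eq_zero hd' hinj (Submodule.sub_mem _ hf (Submodule.smul_mem _ c hg))
    (by simp [hc])
  exact (sub_eq_zero.1 this).symm

lemma finrank_eq_zero (h : ∀ f ∈ shiftHomSpace p d d' τ τ', f p = 0) :
    Module.finrank ℂ (shiftHomSpace p d d' τ τ') = 0 := by
  rw [(Submodule.eq_bot_iff _).2 fun f hf => eq_zero_of_apply_eq_zero hd' hinj hf (h f hf)]
  exact finrank_bot ℂ _

end shiftHomSpace

-- The offset of the arrow of `U_{i,j}` into the vertex `max i j`: it is `1` exactly when the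
-- inclusion `K → K²` there is `e₂`.
def uShift (i j m : ℕ) : ℕ := if i < j ∧ m + 1 = max i j then 1 else 0

section Dimensions

variable {p i j m s : ℕ}

lemma lt_VDim_iff : s < VDim p i m ↔ s = 0 ∧ 1 ≤ m ∧ m ≤ p ∧ i ≤ m := by
  unfold VDim; split_ifs <;> omega

lemma lt_UDim_iff :
    s < UDim p i j m ↔ 1 ≤ m ∧ m ≤ p ∧ min i j ≤ m ∧ (s = 0 ∨ s = 1 ∧ max i j ≤ m) := by
  unfold UDim; split_ifs <;> omega

lemma VDim_eq_zero (h : m = 0 ∨ p < m) : VDim p i m = 0 := by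
  unfold VDim; split_ifs <;> omega

lemma UDim_eq_zero (h : m = 0 ∨ p < m) : UDim p i j m = 0 := by
  unfold UDim; split_ifs <;> omega

lemma VDim_le_VDim_succ (h : m < p) : VDim p i m ≤ VDim p i (m + 1) := by
  unfold VDim; split_ifs <;> omega

lemma UDim_add_uShift_le (h : m < p) : UDim p i j m + uShift i j m ≤ UDim p i j (m + 1) := by
  unfold UDim uShift; split_ifs <;> omega

end Dimensions

lemma homSpace_V_V_eq {p i k : ℕ} :
    HomSpace p (VDim p k) (VDim p i) (VMap p k) (VMap p i)
      (LoopMat (VDim p k p)) (LoopMat (VDim p i p)) =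
    shiftHomSpace p (VDim p k) (VDim p i) (fun _ => 0) (fun _ => 0) := rfl

def homVV (p i k : ℕ) : ∀ m, Matrix (Fin (VDim p i m)) (Fin (VDim p k m)) ℂ :=
  fun _ => Matrix.of fun _ _ => 1

lemma homVV_mem {p i k : ℕ} (hik : i ≤ k) :
    homVV p i k ∈ shiftHomSpace p (VDim p k) (VDim p i) (fun _ => 0) (fun _ => 0) := by
  refine shiftHomSpace.mem_iff.2 ⟨fun m hm hmp r hr s hs => ?_, fun r hr s hs => ?_⟩ <;>
    simp only [homVV, entryOrZero, Matrix.of_apply, lt_VDim_iff] at * <;>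
    split_ifs <;> simp_all <;> omega

lemma finrank_homSpace_V_V {p i k : ℕ} (hk : 1 ≤ k) (hk' : k ≤ p) :
    Module.finrank ℂ (HomSpace p (VDim p k) (VDim p i) (VMap p k) (VMap p i)
      (LoopMat (VDim p k p)) (LoopMat (VDim p i p))) = if i ≤ k then 1 else 0 := by
  have hd' := fun m (hm : m = 0 ∨ p < m) => VDim_eq_zero (i := i) hm
  have hinj := fun m (_ : 1 ≤ m) (hm : m < p) => VDim_le_VDim_succ (i := i) hm
  rw [homSpace_V_V_eq]
  split_ifs with hik
  · refine shiftHomSpace.finrank_eq_one hd' hinj (homVV_mem hik) (fun h => ?_) fun f _ => ?_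
    · have := congrArg (entryOrZero · 0 0) h
      simp [homVV, entryOrZero, lt_VDim_iff] at this
      omega
    · refine ⟨entryOrZero (f p) 0 0, Matrix.ext_entryOrZero fun r hr s hs => ?_⟩
      obtain ⟨rfl, -⟩ := lt_VDim_iff.1 hr
      obtain ⟨rfl, -⟩ := lt_VDim_iff.1 hs
      rw [entryOrZero_smul]
      simp [homVV, entryOrZero, hr, hs]
  · refine shiftHomSpace.finrank_eq_zero hd' hinj fun f hf =>
      Matrix.ext_entryOrZero fun r hr s hs => ?_
    obtain ⟨rfl, -, -, hip⟩ := lt_VDim_iff.1 hr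
    obtain ⟨rfl, -⟩ := lt_VDim_iff.1 hs
    rw [entryOrZero_zero]
    calc entryOrZero (f p) 0 0 = entryOrZero (f (i - 1)) 0 0 :=
          shiftHomSpace.entryOrZero_eq_of_unshifted hf (by omega) (by omega) le_rfl
            fun m hm hmp => by simp [lt_VDim_iff]; omega
      _ = 0 := entryOrZero_of_not_lt _ (by simp [lt_VDim_iff]; omega)

lemma homSpace_V_U_eq {p i j k : ℕ} :
    HomSpace p (VDim p k) (UDim p i j) (VMap p k) (UMap p i j)
      (LoopMat (VDim p k p)) (LoopMat (UDim p i j p)) =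
    shiftHomSpace p (VDim p k) (UDim p i j) (fun _ => 0) (uShift i j) := rfl

-- At each vertex: the basis vector where `U_{i,j}` is one-dimensional, `e₂` where it is
-- two-dimensional.
def homVU (p i j k : ℕ) : ∀ m, Matrix (Fin (UDim p i j m)) (Fin (VDim p k m)) ℂ :=
  fun m => Matrix.of fun r _ => if (r : ℕ) = 1 ∨ m < max i j then 1 else 0

lemma homVU_mem {p i j k : ℕ} (hik : i ≤ k) :
    homVU p i j k ∈ shiftHomSpace p (VDim p k) (UDim p i j) (fun _ => 0) (uShift i j) := by
  refine shiftHomSpace.mem_iff.2 ⟨fun m hm hmp r hr s hs => ?_, fun r hr s hs => ?_⟩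
  · obtain ⟨rfl, -, -, hkm⟩ := lt_VDim_iff.1 hs
    rw [lt_UDim_iff] at hr
    by_cases hτ : i < j ∧ m + 1 = max i j <;>
      simp [uShift, hτ, homVU, entryOrZero, lt_UDim_iff, lt_VDim_iff] <;>
      split_ifs <;> first | rfl | omega
  · obtain ⟨rfl, -⟩ := lt_VDim_iff.1 hs
    rw [lt_UDim_iff] at hr
    simp [homVU, entryOrZero, lt_UDim_iff, lt_VDim_iff]
    omega

lemma entryOrZero_top_zero_of_mem_V_U {p i j k : ℕ} (hi' : i ≤ p) (hj' : j ≤ p) (hk : 1 ≤ k)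
    (hk' : k ≤ p) {f : ∀ m, Matrix (Fin (UDim p i j m)) (Fin (VDim p k m)) ℂ}
    (hf : f ∈ shiftHomSpace p (VDim p k) (UDim p i j) (fun _ => 0) (uShift i j)) :
    entryOrZero (f p) 0 0 = 0 := by
  have := shiftHomSpace.entryOrZero_loop hf (r := 1) (s := 0)
    (by simp [lt_UDim_iff]; omega) (by simp [lt_VDim_iff]; omega)
  rw [entryOrZero_of_not_lt _ (by simp [lt_VDim_iff])] at this
  simpa using this.symm

lemma entryOrZero_top_one_of_mem_V_U {p i j k : ℕ} (hi' : i ≤ p) (hj' : j ≤ p) (hk : 1 ≤ k)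
    (hki : k < i) {f : ∀ m, Matrix (Fin (UDim p i j m)) (Fin (VDim p k m)) ℂ}
    (hf : f ∈ shiftHomSpace p (VDim p k) (UDim p i j) (fun _ => 0) (uShift i j)) :
    entryOrZero (f p) 1 0 = 0 := by
  rcases le_or_gt j i with hji | hij
  · calc entryOrZero (f p) 1 0 = entryOrZero (f (i - 1)) 1 0 :=
          shiftHomSpace.entryOrZero_eq_of_unshifted hf (by omega) (by omega) le_rfl
            fun m hm hmp => by simp [uShift, lt_UDim_iff, lt_VDim_iff]; omega
      _ = 0 := entryOrZero_of_not_lt _ (by simp [lt_UDim_iff]; omega)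
  · -- the arrow into `j` sends `e₁` to `e₂`
    have jump : entryOrZero (f j) 1 0 = entryOrZero (f (j - 1)) 0 0 := by
      have := shiftHomSpace.entryOrZero_succ hf (m := j - 1) (r := 0) (s := 0) (by omega)
        (by omega) (by simp [uShift, lt_UDim_iff]; omega) (by simp [lt_VDim_iff]; omega)
      rwa [Nat.sub_add_cancel (by omega), show uShift i j (j - 1) = 1 by simp [uShift]; omega]
        at this
    calc entryOrZero (f p) 1 0 = entryOrZero (f j) 1 0 :=
          shiftHomSpace.entryOrZero_eq_of_unshifted hf (by omega) (by omega) le_rfl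
            fun m hm hmp => by simp [uShift, lt_UDim_iff, lt_VDim_iff]; omega
      _ = entryOrZero (f (j - 1)) 0 0 := jump
      _ = entryOrZero (f (i - 1)) 0 0 :=
          shiftHomSpace.entryOrZero_eq_of_unshifted hf (by omega) (by omega) (by omega)
            fun m hm hmp => by simp [uShift, lt_UDim_iff, lt_VDim_iff]; omega
      _ = 0 := entryOrZero_of_not_lt _ (by simp [lt_UDim_iff]; omega)

lemma finrank_homSpace_V_U {p i j k : ℕ} (hi' : i ≤ p) (hj' : j ≤ p) (hk : 1 ≤ k) (hk' : k ≤ p) :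
    Module.finrank ℂ (HomSpace p (VDim p k) (UDim p i j) (VMap p k) (UMap p i j)
      (LoopMat (VDim p k p)) (LoopMat (UDim p i j p))) = if i ≤ k then 1 else 0 := by
  have hd' := fun m (hm : m = 0 ∨ p < m) => UDim_eq_zero (i := i) (j := j) hm
  have hinj := fun m (_ : 1 ≤ m) (hm : m < p) => UDim_add_uShift_le (i := i) (j := j) hm
  rw [homSpace_V_U_eq]
  split_ifs with hik
  · refine shiftHomSpace.finrank_eq_one hd' hinj (homVU_mem hik) (fun h => ?_) fun f hf => ?_
    · have := congrArg (entryOrZero · 1 0) h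
      simp [homVU, entryOrZero, lt_UDim_iff, lt_VDim_iff] at this
      omega
    · refine ⟨entryOrZero (f p) 1 0, Matrix.ext_entryOrZero fun r hr s hs => ?_⟩
      obtain ⟨rfl, -⟩ := lt_VDim_iff.1 hs
      rw [entryOrZero_smul]
      rcases (lt_UDim_iff.1 hr).2.2.2 with rfl | ⟨rfl, -⟩
      · rw [entryOrZero_top_zero_of_mem_V_U hi' hj' hk hk' hf]
        simp [homVU, entryOrZero]
        omega
      · simp [homVU, entryOrZero, lt_UDim_iff, lt_VDim_iff]
        omega
  · refine shiftHomSpace.finrank_eq_zero hd' hinj fun f hf =>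
      Matrix.ext_entryOrZero fun r hr s hs => ?_
    obtain ⟨rfl, -⟩ := lt_VDim_iff.1 hs
    rw [entryOrZero_zero]
    rcases (lt_UDim_iff.1 hr).2.2.2 with rfl | ⟨rfl, -⟩
    · exact entryOrZero_top_zero_of_mem_V_U hi' hj' hk hk' hf
    · exact entryOrZero_top_one_of_mem_V_U hi' hj' hk (by omega) hf

lemma homSpace_U_V_eq {p i k l : ℕ} :
    HomSpace p (UDim p k l) (VDim p i) (UMap p k l) (VMap p i)
      (LoopMat (UDim p k l p)) (LoopMat (VDim p i p)) =
    shiftHomSpace p (UDim p k l) (VDim p i) (uShift k l) (fun _ => 0) := rfl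

def homUV (p i k l : ℕ) : ∀ m, Matrix (Fin (VDim p i m)) (Fin (UDim p k l m)) ℂ :=
  fun m => Matrix.of fun _ c => if (c : ℕ) = 0 ∧ l ≤ m then 1 else 0

lemma homUV_mem {p i k l : ℕ} (hil : i ≤ l) :
    homUV p i k l ∈ shiftHomSpace p (UDim p k l) (VDim p i) (uShift k l) (fun _ => 0) := by
  refine shiftHomSpace.mem_iff.2 ⟨fun m hm hmp r hr s hs => ?_, fun r hr s hs => ?_⟩
  · obtain ⟨rfl, -⟩ := lt_VDim_iff.1 hr
    rw [lt_UDim_iff] at hs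
    by_cases hτ : k < l ∧ m + 1 = max k l <;>
      simp [uShift, hτ, homUV, entryOrZero, lt_UDim_iff, lt_VDim_iff] <;>
      (try split_ifs) <;> first | rfl | omega
  · obtain ⟨rfl, -⟩ := lt_VDim_iff.1 hr
    simp [homUV, entryOrZero]

lemma finrank_homSpace_U_V {p i k l : ℕ} (hl : 1 ≤ l) (hl' : l ≤ p) :
    Module.finrank ℂ (HomSpace p (UDim p k l) (VDim p i) (UMap p k l) (VMap p i)
      (LoopMat (UDim p k l p)) (LoopMat (VDim p i p))) = if i ≤ l then 1 else 0 := by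
  have hd' := fun m (hm : m = 0 ∨ p < m) => VDim_eq_zero (i := i) hm
  have hinj := fun m (_ : 1 ≤ m) (hm : m < p) => VDim_le_VDim_succ (i := i) hm
  rw [homSpace_U_V_eq]
  have loop : ∀ f ∈ shiftHomSpace p (UDim p k l) (VDim p i) (uShift k l) (fun _ => 0),
      i ≤ p → entryOrZero (f p) 0 1 = 0 := fun f hf hip => by
    simpa using shiftHomSpace.entryOrZero_loop hf (r := 0) (s := 0)
      (by simp [lt_VDim_iff]; omega) (by simp [lt_UDim_iff]; omega)
  split_ifs with hil
  · refine shiftHomSpace.finrank_eq_one hd' hinj (homUV_mem hil) (fun h => ?_) fun f hf => ?_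
    · have := congrArg (entryOrZero · 0 0) h
      simp [homUV, entryOrZero, lt_UDim_iff, lt_VDim_iff] at this
      omega
    · refine ⟨entryOrZero (f p) 0 0, Matrix.ext_entryOrZero fun r hr s hs => ?_⟩
      obtain ⟨rfl, -⟩ := lt_VDim_iff.1 hr
      rw [entryOrZero_smul]
      rcases (lt_UDim_iff.1 hs).2.2.2 with rfl | ⟨rfl, -⟩
      · simp [homUV, entryOrZero, hr, hs, hl']
      · rw [loop f hf (by omega)]
        simp [homUV, entryOrZero]
  · refine shiftHomSpace.finrank_eq_zero hd' hinj fun f hf =>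
      Matrix.ext_entryOrZero fun r hr s hs => ?_
    obtain ⟨rfl, -, -, hip⟩ := lt_VDim_iff.1 hr
    rw [entryOrZero_zero]
    rcases (lt_UDim_iff.1 hs).2.2.2 with rfl | ⟨rfl, -⟩
    · calc entryOrZero (f p) 0 0 = entryOrZero (f (i - 1)) 0 0 :=
            shiftHomSpace.entryOrZero_eq_of_unshifted hf (by omega) (by omega) le_rfl
              fun m hm hmp => by simp [uShift, lt_UDim_iff, lt_VDim_iff]; omega
        _ = 0 := entryOrZero_of_not_lt _ (by simp [lt_VDim_iff]; omega)
    · exact loop f hf hip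

theorem dim_hom_V_general (p i j k l : ℕ)
    (hi' : i ≤ p) (hj' : j ≤ p)
    (hk : 1 ≤ k) (hk' : k ≤ p) (hl : 1 ≤ l) (hl' : l ≤ p) :
    Module.finrank ℂ
      (HomSpace p (VDim p k) (VDim p i) (VMap p k) (VMap p i)
        (LoopMat (VDim p k p)) (LoopMat (VDim p i p))) =
      (if i ≤ k then 1 else 0) ∧
    Module.finrank ℂ
      (HomSpace p (VDim p k) (UDim p i j) (VMap p k) (UMap p i j)
        (LoopMat (VDim p k p)) (LoopMat (UDim p i j p))) =
      (if i ≤ k then 1 else 0) ∧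
    Module.finrank ℂ
      (HomSpace p (UDim p k l) (VDim p i) (UMap p k l) (VMap p i)
        (LoopMat (UDim p k l p)) (LoopMat (VDim p i p))) =
      (if i ≤ l then 1 else 0) :=
  ⟨finrank_homSpace_V_V hk hk', finrank_homSpace_V_U hi' hj' hk hk',
    finrank_homSpace_U_V hl hl'⟩

/-- `dim Hom(V_k, V_i) = dim Hom(V_k, U_{i,j}) = δ_{i≤k}` and
`dim Hom(U_{k,l}, V_i) = δ_{i≤l}`. -/
theorem dim_hom_V (p i j k l : ℕ)
    (hi : 1 ≤ i) (hi' : i ≤ p) (hj : 1 ≤ j) (hj' : j ≤ p)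
    (hk : 1 ≤ k) (hk' : k ≤ p) (hl : 1 ≤ l) (hl' : l ≤ p) :
    Module.finrank ℂ
      (HomSpace p (VDim p k) (VDim p i) (VMap p k) (VMap p i)
        (LoopMat (VDim p k p)) (LoopMat (VDim p i p))) =
      (if i ≤ k then 1 else 0) ∧
    Module.finrank ℂ
      (HomSpace p (VDim p k) (UDim p i j) (VMap p k) (UMap p i j)
        (LoopMat (VDim p k p)) (LoopMat (UDim p i j p))) =
      (if i ≤ k then 1 else 0) ∧
    Module.finrank ℂ
      (HomSpace p (UDim p k l) (VDim p i) (UMap p k l) (VMap p i)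
        (LoopMat (UDim p k l p)) (LoopMat (VDim p i p))) =
      (if i ≤ l then 1 else 0) :=
  dim_hom_V_general p i j k l hi' hj' hk hk' hl hl'
end

section
/- Let N be a nilpotent n×n complex matrix and suppose that for each k ∈ {1,…,n−1}, the minor det((N^{n−k})_{(k,k)}) is non-zero, where (N^m)_{(a,b)} denotes the submatrix of N^m formed by the last a rows and first b columns. Then N is B-conjugate (B the upper triangular Borel of GL_n(ℂ)) to a unique matrix H in H_B = {H nilpotent : H strictly lower triangular with subdiagonal entries H_{i+1,i} all equal to 1}, i.e. H_{i,j} = 0 for i ≤ j, H_{i+1,i} = 1 for all i, and H_{i,j} arbitrary for i > j+1; in particular N lies in the orbit B·H_B. -/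
open Matrix

/-- The submatrix of `M` formed by its last `a` rows and first `b` columns. -/
def lastRowsFirstCols (n a b : ℕ) (ha : a ≤ n) (hb : b ≤ n)
    (M : Matrix (Fin n) (Fin n) ℂ) : Matrix (Fin a) (Fin b) ℂ :=
  Matrix.of fun r c =>
    M ⟨n - a + r.val, by have := r.isLt; omega⟩ ⟨c.val, by have := c.isLt; omega⟩

namespace GBNF
variable {n : ℕ}

noncomputable def W (n k : ℕ) : Submodule ℂ (Fin n → ℂ) where
  carrier := {x | ∀ i : Fin n, k ≤ (i : ℕ) → x i = 0}
  add_mem' := fun hx hy i hi => by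
    simp only [Pi.add_apply]; rw [hx i hi, hy i hi, add_zero]
  zero_mem' := fun i hi => rfl
  smul_mem' := fun c x hx i hi => by
    simp only [Pi.smul_apply]; rw [hx i hi, smul_zero]

lemma mem_W {k : ℕ} {x : Fin n → ℂ} : x ∈ W n k ↔ ∀ i : Fin n, k ≤ (i : ℕ) → x i = 0 :=
  Iff.rfl

lemma W_top (x : Fin n → ℂ) : x ∈ W n n := fun i hi => absurd i.isLt (by omega)

lemma W_mono {k k' : ℕ} (h : k ≤ k') {x : Fin n → ℂ} (hx : x ∈ W n k) : x ∈ W n k' :=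
  fun i hi => hx i (le_trans h hi)

noncomputable def A (N : Matrix (Fin n) (Fin n) ℂ) (k : ℕ) : Submodule ℂ (Fin n → ℂ) :=
  (W n k).map ((N ^ (n - k)).mulVecLin)

lemma mem_A {N : Matrix (Fin n) (Fin n) ℂ} {k : ℕ} {y : Fin n → ℂ} :
    y ∈ A N k ↔ ∃ x ∈ W n k, (N ^ (n - k)) *ᵥ x = y := by
  simp [A, Submodule.mem_map, mulVecLin_apply]

lemma mem_A_zero {N : Matrix (Fin n) (Fin n) ℂ} {y : Fin n → ℂ} (hy : y ∈ A N 0) : y = 0 := by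
  obtain ⟨x, hx, rfl⟩ := mem_A.mp hy
  have : x = 0 := funext fun i => hx i (Nat.zero_le _)
  simp [this]

lemma mem_A_top {N : Matrix (Fin n) (Fin n) ℂ} (y : Fin n → ℂ) : y ∈ A N n :=
  mem_A.mpr ⟨y, W_top y, by simp⟩

lemma sum_first (k : ℕ) (hk : k ≤ n) (t : Fin n → ℂ) (ht : ∀ j : Fin n, k ≤ (j : ℕ) → t j = 0) :
    ∑ j : Fin n, t j = ∑ c : Fin k, t (Fin.castLE hk c) := by
  have : ∑ c : Fin k, t (Fin.castLE hk c) = ∑ j ∈ Finset.univ.map (Fin.castLEEmb hk), t j := by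
    rw [Finset.sum_map]; rfl
  rw [this]
  refine (Finset.sum_subset (Finset.subset_univ _) (fun j _ hj => ht j ?_)).symm
  by_contra h
  push_neg at h
  exact hj (Finset.mem_map.mpr ⟨⟨(j : ℕ), h⟩, Finset.mem_univ _, by ext; simp⟩)

variable {N : Matrix (Fin n) (Fin n) ℂ}

/-- Key computation: `(N^(n-k)) *ᵥ x` at a row in the last `k` rows, for `x ∈ W n k`,
is given by the corner minor matrix. -/
lemma corner_mulVec {k : ℕ} (hk : k ≤ n) {x : Fin n → ℂ} (hx : x ∈ W n k) (r : Fin k) :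
    ((N ^ (n - k)) *ᵥ x) ⟨n - k + (r : ℕ), by omega⟩ =
      (lastRowsFirstCols n k k hk hk (N ^ (n - k)) *ᵥ fun c => x (Fin.castLE hk c)) r := by
  have : ∀ j : Fin n, k ≤ (j : ℕ) →
      (N ^ (n - k)) ⟨n - k + (r : ℕ), by omega⟩ j * x j = 0 := fun j hj => by
    rw [hx j hj, mul_zero]
  calc ((N ^ (n - k)) *ᵥ x) ⟨n - k + (r : ℕ), by omega⟩
      = ∑ j : Fin n, (N ^ (n - k)) ⟨n - k + (r : ℕ), by omega⟩ j * x j := rfl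
    _ = ∑ c : Fin k, (N ^ (n - k)) ⟨n - k + (r : ℕ), by omega⟩ (Fin.castLE hk c)
          * x (Fin.castLE hk c) := sum_first k hk _ this
    _ = _ := by
        refine Finset.sum_congr rfl fun c _ => ?_
        congr 1

section
variable (hminor : ∀ k : ℕ, 1 ≤ k → k < n → ∀ hk : k ≤ n,
    (lastRowsFirstCols n k k hk hk (N ^ (n - k))).det ≠ 0)

include hminor

lemma inj_W {k : ℕ} (hk1 : 1 ≤ k) (hk2 : k < n) {x : Fin n → ℂ}
    (hx : x ∈ W n k) (h0 : ∀ i : Fin n, n - k ≤ (i : ℕ) → ((N ^ (n - k)) *ᵥ x) i = 0) :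
    x = 0 := by
  have hk : k ≤ n := hk2.le
  set M := lastRowsFirstCols n k k hk hk (N ^ (n - k)) with hM
  have hdet : IsUnit M.det := isUnit_iff_ne_zero.mpr (hminor k hk1 hk2 hk)
  have hMu : M *ᵥ (fun c => x (Fin.castLE hk c)) = 0 := by
    funext r
    have h1 := (corner_mulVec (N := N) hk hx r).symm
    rw [h0 ⟨n - k + (r : ℕ), by omega⟩ (by simp)] at h1
    exact h1
  have hu : (fun c => x (Fin.castLE hk c)) = 0 := by
    have h1 : M⁻¹ *ᵥ (M *ᵥ fun c => x (Fin.castLE hk c)) = fun c => x (Fin.castLE hk c) := by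
      rw [mulVec_mulVec, Matrix.nonsing_inv_mul M hdet, one_mulVec]
    rw [hMu, mulVec_zero] at h1
    exact h1.symm
  funext i
  by_cases h : (i : ℕ) < k
  · have := congrFun hu ⟨(i : ℕ), h⟩
    simpa [Fin.castLE, Fin.ext_iff] using this
  · exact hx i (le_of_not_gt h)

lemma solve_W {k : ℕ} (hk1 : 1 ≤ k) (hk2 : k < n) (v : Fin n → ℂ) :
    ∃ x ∈ W n k, ∀ i : Fin n, n - k ≤ (i : ℕ) → ((N ^ (n - k)) *ᵥ x) i = v i := by
  have hk : k ≤ n := hk2.le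
  set M := lastRowsFirstCols n k k hk hk (N ^ (n - k)) with hM
  have hdet : IsUnit M.det := isUnit_iff_ne_zero.mpr (hminor k hk1 hk2 hk)
  set w : Fin k → ℂ := fun r => v ⟨n - k + (r : ℕ), by omega⟩ with hw
  set u : Fin k → ℂ := M⁻¹ *ᵥ w with hu
  set x : Fin n → ℂ := fun i => if h : (i : ℕ) < k then u ⟨(i : ℕ), h⟩ else 0 with hx
  have hxW : x ∈ W n k := fun i hi => dif_neg (by omega)
  have hxu : (fun c => x (Fin.castLE hk c)) = u := by
    funext c
    simp only [hx, Fin.coe_castLE]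
    rw [dif_pos c.isLt]
  refine ⟨x, hxW, fun i hi => ?_⟩
  set r : Fin k := ⟨(i : ℕ) - (n - k), by omega⟩ with hr
  have hir : i = ⟨n - k + (r : ℕ), by omega⟩ := by ext; simp [hr]; omega
  rw [hir]
  rw [corner_mulVec (N := N) hk hxW r, hxu, hu, mulVec_mulVec, Matrix.mul_nonsing_inv M hdet, one_mulVec]

variable (hN : N ^ n = 0)
include hN

omit hminor in
lemma pow_big_eq_zero {m : ℕ} (hm : n ≤ m) : N ^ m = 0 := by
  rw [show m = n + (m - n) by omega, pow_add, hN, zero_mul]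

omit hN in
lemma A_inter_W {k : ℕ} (hk1 : 1 ≤ k) (hk2 : k < n) {y : Fin n → ℂ}
    (hyA : y ∈ A N k) (hyW : y ∈ W n (n - k)) : y = 0 := by
  obtain ⟨x, hx, rfl⟩ := mem_A.mp hyA
  rw [inj_W hminor hk1 hk2 hx (fun i hi => hyW i hi), mulVec_zero]

omit hN in
lemma decompose {k : ℕ} (hk : k < n) (v : Fin n → ℂ) :
    ∃ a ∈ A N k, v - a ∈ W n (n - k) := by
  rcases Nat.eq_zero_or_pos k with rfl | hk1
  · exact ⟨0, zero_mem _, by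
      rw [sub_zero]
      exact fun i hi => absurd i.isLt (by omega)⟩
  · obtain ⟨x, hx, h⟩ := solve_W hminor hk1 hk v
    refine ⟨(N ^ (n - k)) *ᵥ x, mem_A.mpr ⟨x, hx, rfl⟩, fun i hi => ?_⟩
    simp only [Pi.sub_apply]
    rw [h i hi, sub_self]

lemma A_succ {k : ℕ} (hk : k < n) : A N k ≤ A N (k + 1) := by
  intro y hy
  rcases Nat.eq_zero_or_pos k with rfl | hk1
  · rw [mem_A_zero hy]; exact zero_mem _
  rcases Nat.lt_or_ge (k + 1) n with hk2 | hk2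
  · obtain ⟨x, hx, rfl⟩ := mem_A.mp hy
    obtain ⟨a, ha, hw⟩ := decompose hminor hk2 ((N ^ (n - k)) *ᵥ x)
    have e : n - (k + 1) = n - k - 1 := by omega
    have hz : (N ^ (k + 1)) *ᵥ ((N ^ (n - k)) *ᵥ x - a) = 0 := by
      obtain ⟨z, hzW, rfl⟩ := mem_A.mp ha
      rw [mulVec_sub, mulVec_mulVec, mulVec_mulVec, ← pow_add, ← pow_add,
        pow_big_eq_zero hN (by omega), show k + 1 + (n - (k+1)) = n by omega, hN,
        zero_mulVec, zero_mulVec, sub_self]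
    have e2 : n - (n - k - 1) = k + 1 := by omega
    have h0 : ∀ i : Fin n, n - (n - k - 1) ≤ (i : ℕ) →
        ((N ^ (n - (n - k - 1))) *ᵥ ((N ^ (n - k)) *ᵥ x - a)) i = 0 := by
      rw [e2]
      intro i _
      rw [hz]; rfl
    have hw0 : (N ^ (n - k)) *ᵥ x - a = 0 :=
      inj_W hminor (by omega) (by omega) (by rw [← e]; exact hw) h0
    have : (N ^ (n - k)) *ᵥ x = a := by
      have := sub_eq_zero.mp hw0; exact this
    rw [this]; exact ha
  · have : k + 1 = n := by omega
    rw [this]; exact mem_A_top _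

lemma A_mono {k k' : ℕ} (h : k ≤ k') (h' : k' ≤ n) : A N k ≤ A N k' :=
  Nat.le_induction (fun _ => le_rfl)
    (fun k'' _ ih h' => le_trans (ih (by omega)) (A_succ hminor hN (by omega))) k' h h'

lemma A_step {m : ℕ} (hm : m + 1 ≤ n) {y : Fin n → ℂ} (hy : y ∈ A N (m + 1)) :
    N *ᵥ y ∈ A N m := by
  obtain ⟨x, hx, rfl⟩ := mem_A.mp hy
  rcases Nat.eq_zero_or_pos m with rfl | hm1
  · rw [mulVec_mulVec, ← pow_succ', show n - (0 + 1) + 1 = n by omega, hN, zero_mulVec]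
    exact zero_mem _
  · have key : N *ᵥ ((N ^ (n - (m+1))) *ᵥ x) = (N ^ (n - m)) *ᵥ x := by
      rw [mulVec_mulVec, ← pow_succ', show n - (m+1) + 1 = n - m by omega]
    rw [key]
    obtain ⟨a, ha, hw⟩ := decompose hminor (show m < n by omega) ((N ^ (n - m)) *ᵥ x)
    have hz : (N ^ m) *ᵥ ((N ^ (n - m)) *ᵥ x - a) = 0 := by
      obtain ⟨z, hzW, rfl⟩ := mem_A.mp ha
      rw [mulVec_sub, mulVec_mulVec, mulVec_mulVec, ← pow_add,
        show m + (n - m) = n by omega, hN, zero_mulVec, zero_mulVec, sub_self]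
    have e2 : n - (n - m) = m := by omega
    have h0 : ∀ i : Fin n, n - (n - m) ≤ (i : ℕ) →
        ((N ^ (n - (n - m))) *ᵥ ((N ^ (n - m)) *ᵥ x - a)) i = 0 := by
      rw [e2]
      intro i _
      rw [hz]; rfl
    have hw0 : (N ^ (n - m)) *ᵥ x - a = 0 :=
      inj_W hminor (by omega) (by omega) hw h0
    rw [sub_eq_zero.mp hw0]
    exact ha

lemma A_step_iter (t : ℕ) : ∀ {m : ℕ}, m ≤ n → ∀ {y : Fin n → ℂ}, y ∈ A N m →
    (N ^ t) *ᵥ y ∈ A N (m - t) := by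
  induction t with
  | zero => intro m hm y hy; rw [pow_zero, one_mulVec]; simpa using hy
  | succ t ih =>
    intro m hm y hy
    have h1 : (N ^ (t + 1)) *ᵥ y = N *ᵥ ((N ^ t) *ᵥ y) := by
      rw [mulVec_mulVec, ← pow_succ']
    rw [h1]
    have h2 := ih hm hy
    rcases Nat.eq_zero_or_pos (m - t) with hmt | hmt
    · rw [hmt] at h2
      rw [mem_A_zero h2, mulVec_zero, show m - (t+1) = 0 by omega]
      exact zero_mem _
    · have e : m - t = (m - (t + 1)) + 1 := by omega
      rw [e] at h2
      exact A_step hminor hN (m := m - (t + 1)) (by omega) h2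

lemma refine_decomp {m : ℕ} (hm : m + 1 ≤ n) {y : Fin n → ℂ} (hy : y ∈ A N (m + 1)) :
    ∃ w, w ∈ A N (m + 1) ∧ w ∈ W n (n - m) ∧ y - w ∈ A N m := by
  obtain ⟨a, ha, hw⟩ := decompose hminor (by omega : m < n) y
  exact ⟨y - a, sub_mem hy (A_succ hminor hN (by omega) ha), hw, by simpa using ha⟩

lemma nonstep {m : ℕ} (hmn : m + 2 ≤ n) {x : Fin n → ℂ} (hxA : x ∈ A N (m + 2))
    (hxW : x ∈ W n (n - m - 1)) (hx0 : x ≠ 0) : N *ᵥ x ∉ A N m := by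
  intro h
  have h1 : (N ^ (m + 1)) *ᵥ x = 0 := by
    have h2 : (N ^ m) *ᵥ (N *ᵥ x) ∈ A N (m - m) :=
      A_step_iter hminor hN m (m := m) (by omega) h
    rw [Nat.sub_self] at h2
    rw [pow_succ, ← mulVec_mulVec]
    exact mem_A_zero h2
  have e2 : n - (n - m - 1) = m + 1 := by omega
  have h0 : ∀ i : Fin n, n - (n - m - 1) ≤ (i : ℕ) →
      ((N ^ (n - (n - m - 1))) *ᵥ x) i = 0 := by
    rw [e2]
    intro i _
    rw [h1]; rfl
  exact hx0 (inj_W hminor (by omega) (by omega) hxW h0)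

end

open scoped Classical in
/-- The canonical basis vectors adapted to the flag. -/
noncomputable def fvec (N : Matrix (Fin n) (Fin n) ℂ) : ℕ → (Fin n → ℂ)
  | 0 => if h : 0 < n then Pi.single (⟨0, h⟩ : Fin n) 1 else 0
  | (j + 1) =>
      if h : ∃ v, v ∈ A N (n - j - 1) ∧ v ∈ W n (j + 2) ∧
          (N *ᵥ fvec N j) - v ∈ A N (n - j - 2) ∧ v ≠ 0 then h.choose else 0

section
variable {N : Matrix (Fin n) (Fin n) ℂ}
variable (hminor : ∀ k : ℕ, 1 ≤ k → k < n → ∀ hk : k ≤ n,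
    (lastRowsFirstCols n k k hk hk (N ^ (n - k))).det ≠ 0)
variable (hN : N ^ n = 0)
include hminor hN

lemma step_exists {j : ℕ} (hj : j + 1 < n) (hprev : fvec N j ∈ A N (n - j))
    (hprevW : fvec N j ∈ W n (j + 1)) (hprev0 : fvec N j ≠ 0) :
    ∃ v, v ∈ A N (n - j - 1) ∧ v ∈ W n (j + 2) ∧
      (N *ᵥ fvec N j) - v ∈ A N (n - j - 2) ∧ v ≠ 0 := by
  have hy : N *ᵥ fvec N j ∈ A N (n - j - 1) := by
    have := A_step hminor hN (m := n - j - 1) (by omega)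
      (by rw [show n - j - 1 + 1 = n - j by omega]; exact hprev)
    exact this
  obtain ⟨w, hwA, hwW, hwa⟩ := refine_decomp hminor hN (m := n - j - 2)
    (by omega) (by rw [show n - j - 2 + 1 = n - j - 1 by omega]; exact hy)
  rw [show n - j - 2 + 1 = n - j - 1 by omega] at hwA
  rw [show n - (n - j - 2) = j + 2 by omega] at hwW
  refine ⟨w, hwA, hwW, hwa, ?_⟩
  rintro rfl
  rw [sub_zero] at hwa
  have hns := nonstep hminor hN (m := n - j - 2) (by omega)
    (by rw [show n - j - 2 + 2 = n - j by omega]; exact hprev)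
    (by rw [show n - (n - j - 2) - 1 = j + 1 by omega]; exact hprevW) hprev0
  exact hns hwa

lemma fvec_spec : ∀ j, j < n →
    fvec N j ∈ A N (n - j) ∧ fvec N j ∈ W n (j + 1) ∧ fvec N j ≠ 0 := by
  intro j
  induction j with
  | zero =>
    intro hj
    rw [fvec, dif_pos hj]
    refine ⟨by rw [Nat.sub_zero]; exact mem_A_top _, fun i hi => ?_, ?_⟩
    · exact Pi.single_eq_of_ne (by rintro rfl; simp at hi) 1
    · intro h
      have := congrFun h ⟨0, hj⟩
      rw [Pi.single_eq_same] at this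
      exact one_ne_zero this
  | succ j ih =>
    intro hj
    obtain ⟨h1, h2, h3⟩ := ih (by omega)
    have hex := step_exists hminor hN hj h1 h2 h3
    rw [fvec, dif_pos hex]
    obtain ⟨g1, g2, _, g4⟩ := hex.choose_spec
    exact ⟨by rw [show n - (j + 1) = n - j - 1 by omega]; exact g1, g2, g4⟩

lemma fvec_rel {j : ℕ} (hj : j + 1 < n) :
    N *ᵥ fvec N j - fvec N (j + 1) ∈ A N (n - j - 2) := by
  obtain ⟨h1, h2, h3⟩ := fvec_spec hminor hN j (by omega)
  have hex := step_exists hminor hN hj h1 h2 h3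
  rw [fvec, dif_pos hex]
  exact hex.choose_spec.2.2.1

lemma fvec_diag {j : ℕ} (hj : j < n) : fvec N j ⟨j, hj⟩ ≠ 0 := by
  obtain ⟨h1, h2, h3⟩ := fvec_spec hminor hN j hj
  intro hcoord
  rcases Nat.eq_zero_or_pos j with rfl | hj1
  · rw [fvec, dif_pos (by omega : 0 < n)] at hcoord
    rw [Pi.single_eq_same] at hcoord
    exact one_ne_zero hcoord
  · refine h3 (A_inter_W hminor (k := n - j) (by omega) (by omega) h1 ?_)
    rw [show n - (n - j) = j by omega]
    intro i hi
    have hval : ((⟨j, hj⟩ : Fin n) : ℕ) = j := rfl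
    rcases Nat.eq_or_lt_of_le hi with he | hlt
    · have : i = ⟨j, hj⟩ := Fin.ext (show (i : ℕ) = j by omega)
      rw [this]; exact hcoord
    · exact h2 i (by omega)

lemma repr_A : ∀ s, s ≤ n → ∀ y ∈ A N s, ∃ c : Fin n → ℂ,
    (∀ i : Fin n, (i : ℕ) < n - s → c i = 0) ∧ y = ∑ i : Fin n, c i • fvec N (i : ℕ) := by
  intro s
  induction s with
  | zero =>
    intro _ y hy
    exact ⟨0, fun i _ => rfl, by rw [mem_A_zero hy]; simp⟩
  | succ s ih =>
    intro hs y hy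
    obtain ⟨w, hwA, hwW, hwa⟩ := refine_decomp hminor hN (m := s) (by omega) hy
    have hj0 : n - s - 1 < n := by omega
    set j0 : Fin n := ⟨n - s - 1, hj0⟩ with hj0def
    obtain ⟨hfA, hfW, hf0⟩ := fvec_spec hminor hN (n - s - 1) hj0
    have hfd := fvec_diag hminor hN hj0
    set c0 : ℂ := w j0 / fvec N (n - s - 1) j0 with hc0
    have hw' : w - c0 • fvec N (n - s - 1) = 0 := by
      have hmemA : w - c0 • fvec N (n - s - 1) ∈ A N (s + 1) := by
        refine sub_mem hwA (Submodule.smul_mem _ _ ?_)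
        rw [show n - (n - s - 1) = s + 1 by omega] at hfA
        exact hfA
      have hmemW : ∀ i : Fin n, n - s - 1 ≤ (i : ℕ) → (w - c0 • fvec N (n - s - 1)) i = 0 := by
        intro i hi
        have hval : (j0 : ℕ) = n - s - 1 := rfl
        rcases Nat.eq_or_lt_of_le hi with he | hlt
        · have : i = j0 := Fin.ext (show (i : ℕ) = n - s - 1 by omega)
          rw [this]
          simp only [Pi.sub_apply, Pi.smul_apply, smul_eq_mul, hc0]
          rw [div_mul_cancel₀ _ hfd, sub_self]
        · simp only [Pi.sub_apply, Pi.smul_apply, smul_eq_mul]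
          rw [hwW i (by omega), hfW i (by omega), mul_zero, sub_self]
      rcases Nat.lt_or_ge (s + 1) n with hsn | hsn
      · refine A_inter_W hminor (k := s + 1) (by omega) hsn hmemA ?_
        rw [show n - (s + 1) = n - s - 1 by omega]
        exact hmemW
      · funext i
        exact hmemW i (by omega)
    obtain ⟨c', hc's, hc'⟩ := ih (by omega) (y - w) hwa
    refine ⟨c' + fun i => if i = j0 then c0 else 0, fun i hi => ?_, ?_⟩
    · simp only [Pi.add_apply]
      have hval : (j0 : ℕ) = n - s - 1 := rfl
      rw [hc's i (by omega), if_neg (by rintro rfl; omega), add_zero]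
    · have hsum : ∑ i : Fin n, ((c' + fun i => if i = j0 then c0 else 0) i) • fvec N (i : ℕ)
          = (∑ i : Fin n, c' i • fvec N (i : ℕ))
            + ∑ i : Fin n, (if i = j0 then c0 else 0) • fvec N (i : ℕ) := by
        rw [← Finset.sum_add_distrib]
        refine Finset.sum_congr rfl fun i _ => ?_
        rw [Pi.add_apply, add_smul]
      rw [hsum, ← hc']
      have hone : ∑ i : Fin n, (if i = j0 then c0 else 0) • fvec N (i : ℕ)
          = c0 • fvec N (n - s - 1) := by
        rw [Finset.sum_eq_single j0]
        · rw [if_pos rfl]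
        · intro b _ hb
          rw [if_neg hb, zero_smul]
        · intro h
          exact absurd (Finset.mem_univ _) h
      rw [hone]
      have : w = c0 • fvec N (n - s - 1) := by
        have := sub_eq_zero.mp hw'
        exact this
      rw [← this]
      abel

end


/-- Matrix whose columns are the adapted basis vectors. -/
noncomputable def Cmat (N : Matrix (Fin n) (Fin n) ℂ) : Matrix (Fin n) (Fin n) ℂ :=
  Matrix.of fun i j => fvec N (j : ℕ) i

lemma col_mul_eq (P Q : Matrix (Fin n) (Fin n) ℂ) (j : Fin n) :
    (fun i => (P * Q) i j) = P *ᵥ (fun k => Q k j) := by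
  funext i
  simp [Matrix.mul_apply, Matrix.mulVec, dotProduct]

lemma mulVec_eq_sum (P : Matrix (Fin n) (Fin n) ℂ) (c : Fin n → ℂ) (r : Fin n) :
    (P *ᵥ c) r = ∑ k : Fin n, P r k * c k := by
  simp [Matrix.mulVec, dotProduct]

section
variable {N : Matrix (Fin n) (Fin n) ℂ}
variable (hminor : ∀ k : ℕ, 1 ≤ k → k < n → ∀ hk : k ≤ n,
    (lastRowsFirstCols n k k hk hk (N ^ (n - k))).det ≠ 0)
variable (hN : N ^ n = 0)
include hminor hN

lemma Cmat_triangular : (Cmat N).BlockTriangular id := by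
  intro i j hij
  have hlt : (j : ℕ) < (i : ℕ) := hij
  exact (fvec_spec hminor hN (j : ℕ) j.isLt).2.1 i (by omega)

lemma Cmat_diag (i : Fin n) : Cmat N i i ≠ 0 := by
  have := fvec_diag hminor hN (j := (i : ℕ)) i.isLt
  exact this

lemma Cmat_det : IsUnit (Cmat N).det := by
  rw [Matrix.det_of_upperTriangular (Cmat_triangular hminor hN)]
  exact isUnit_iff_ne_zero.mpr
    (Finset.prod_ne_zero_iff.mpr fun i _ => Cmat_diag hminor hN i)

lemma exists_dvec (j : Fin n) : ∃ d : Fin n → ℂ,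
    (∀ i : Fin n, (i : ℕ) ≤ (j : ℕ) → d i = 0) ∧
    (∀ i : Fin n, (i : ℕ) = (j : ℕ) + 1 → d i = 1) ∧
    N *ᵥ fvec N (j : ℕ) = (Cmat N) *ᵥ d := by
  rcases Nat.lt_or_ge ((j : ℕ) + 1) n with hj | hj
  · have hrel := fvec_rel hminor hN hj
    obtain ⟨c, hcs, hcr⟩ := repr_A hminor hN (n - (j : ℕ) - 2) (by omega) _ hrel
    set j' : Fin n := ⟨(j : ℕ) + 1, hj⟩ with hj'def
    have hval : (j' : ℕ) = (j : ℕ) + 1 := rfl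
    refine ⟨c + Pi.single j' 1, ?_, ?_, ?_⟩
    · intro i hi
      simp only [Pi.add_apply]
      rw [hcs i (by omega), Pi.single_eq_of_ne (fun hh => by rw [hh] at hi; omega) 1,
        add_zero]
    · intro i hi
      have : i = j' := Fin.ext (by omega)
      rw [this]
      simp only [Pi.add_apply, Pi.single_eq_same]
      rw [hcs j' (by omega), zero_add]
    · rw [mulVec_add, mulVec_single_one]
      have h1 : (Cmat N).col j' = fvec N ((j : ℕ) + 1) := by
        funext i; rw [Matrix.col_apply]; rfl
      have h2 : (Cmat N) *ᵥ c = ∑ i : Fin n, c i • fvec N (i : ℕ) := by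
        funext r
        rw [mulVec_eq_sum, Finset.sum_apply]
        exact Finset.sum_congr rfl fun k _ => by
          simp only [Pi.smul_apply, smul_eq_mul]; rw [mul_comm]; rfl
      rw [h1, h2, ← hcr]
      abel
  · have hf : fvec N (j : ℕ) ∈ A N 1 := by
      have h1 := (fvec_spec hminor hN (j : ℕ) j.isLt).1
      rwa [show n - (j : ℕ) = 1 by omega] at h1
    have hz : N *ᵥ fvec N (j : ℕ) ∈ A N 0 :=
      A_step hminor hN (m := 0) (by omega) (by simpa using hf)
    refine ⟨0, fun _ _ => rfl, fun i hi => absurd i.isLt (by omega), ?_⟩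
    rw [mem_A_zero hz, mulVec_zero]

lemma H_entries (j : Fin n) (d : Fin n → ℂ) (hd : N *ᵥ fvec N (j : ℕ) = (Cmat N) *ᵥ d)
    (i : Fin n) : ((Cmat N)⁻¹ * N * Cmat N) i j = d i := by
  have hdet := Cmat_det hminor hN
  have e1 : (Cmat N)⁻¹ * N * Cmat N = (Cmat N)⁻¹ * (N * Cmat N) := by
    rw [Matrix.mul_assoc]
  have e2 : (fun i => ((Cmat N)⁻¹ * (N * Cmat N)) i j)
      = (Cmat N)⁻¹ *ᵥ (fun k => (N * Cmat N) k j) := col_mul_eq _ _ j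
  have e3 : (fun k => (N * Cmat N) k j) = N *ᵥ (fun l => (Cmat N) l j) := col_mul_eq _ _ j
  have e4 : (fun l => (Cmat N) l j) = fvec N (j : ℕ) := rfl
  have e5 : (fun i => ((Cmat N)⁻¹ * (N * Cmat N)) i j) = d := by
    rw [e2, e3, e4, hd, mulVec_mulVec, Matrix.nonsing_inv_mul _ hdet, one_mulVec]
  calc ((Cmat N)⁻¹ * N * Cmat N) i j
      = (fun i => ((Cmat N)⁻¹ * (N * Cmat N)) i j) i := by rw [e1]
    _ = d i := by rw [e5]

lemma uniqueness_aux (hn : 0 < n) (Hu bu : Matrix (Fin n) (Fin n) ℂ)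
    (hu0 : ∀ i j : Fin n, (i : ℕ) ≤ (j : ℕ) → Hu i j = 0)
    (hu1 : ∀ i j : Fin n, (i : ℕ) = (j : ℕ) + 1 → Hu i j = 1)
    (hbu : IsUnit bu) (hbt : ∀ i j : Fin n, (j : ℕ) < (i : ℕ) → bu i j = 0)
    (hH : bu * N * bu⁻¹ = Hu) :
    Hu = (Cmat N)⁻¹ * N * Cmat N := by
  set Cu := bu⁻¹ with hCudef
  have hdetbu : IsUnit bu.det := (Matrix.isUnit_iff_isUnit_det bu).mp hbu
  have hdetCu : IsUnit Cu.det := Matrix.isUnit_nonsing_inv_det bu hdetbu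
  have hbuCu : Cu⁻¹ = bu := Matrix.nonsing_inv_nonsing_inv bu hdetbu
  have hNC : N * Cu = Cu * Hu := by
    rw [← hH, hCudef]
    calc N * bu⁻¹ = 1 * (N * bu⁻¹) := (one_mul _).symm
      _ = bu⁻¹ * bu * (N * bu⁻¹) := by rw [Matrix.nonsing_inv_mul bu hdetbu]
      _ = bu⁻¹ * (bu * N * bu⁻¹) := by simp only [Matrix.mul_assoc]
  have hbt' : bu.BlockTriangular id := fun i j h => hbt i j h
  have hCut : Cu.BlockTriangular id := by
    letI := bu.invertibleOfIsUnitDet hdetbu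
    exact Matrix.blockTriangular_inv_of_blockTriangular hbt'
  have hdiagCu : ∀ i : Fin n, Cu i i ≠ 0 := by
    intro i hzero
    have hd := Matrix.det_of_upperTriangular hCut
    have hne : (∏ i : Fin n, Cu i i) ≠ 0 := isUnit_iff_ne_zero.mp (hd ▸ hdetCu)
    exact hne (Finset.prod_eq_zero (Finset.mem_univ i) hzero)
  -- powers of N land in the span of the later columns of `Cu`
  have hQ : ∀ t : ℕ, ∀ v : Fin n → ℂ, ∃ c : Fin n → ℂ,
      (∀ i : Fin n, (i : ℕ) < t → c i = 0) ∧ (N ^ t) *ᵥ v = Cu *ᵥ c := by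
    intro t
    induction t with
    | zero =>
      intro v
      refine ⟨Cu⁻¹ *ᵥ v, fun i hi => absurd hi (by omega), ?_⟩
      rw [pow_zero, one_mulVec, mulVec_mulVec, Matrix.mul_nonsing_inv _ hdetCu, one_mulVec]
    | succ t ih =>
      intro v
      obtain ⟨c, hc1, hc2⟩ := ih v
      refine ⟨Hu *ᵥ c, ?_, ?_⟩
      · intro i hi
        rw [mulVec_eq_sum]
        refine Finset.sum_eq_zero fun k _ => ?_
        rcases Nat.lt_or_ge (k : ℕ) t with hk | hk
        · rw [hc1 k hk, mul_zero]
        · rw [hu0 i k (by omega), zero_mul]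
      · rw [pow_succ', ← mulVec_mulVec, hc2, mulVec_mulVec, hNC, ← mulVec_mulVec]
  have hrepr : ∀ s, s ≤ n → ∀ y ∈ A N s, ∃ c : Fin n → ℂ,
      (∀ i : Fin n, (i : ℕ) < n - s → c i = 0) ∧ y = Cu *ᵥ c := by
    intro s hs y hy
    obtain ⟨x, hx, rfl⟩ := mem_A.mp hy
    obtain ⟨c, h1, h2⟩ := hQ (n - s) x
    exact ⟨c, h1, h2⟩
  have hinj : ∀ c : Fin n → ℂ, Cu⁻¹ *ᵥ (Cu *ᵥ c) = c := by
    intro c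
    rw [mulVec_mulVec, Matrix.nonsing_inv_mul _ hdetCu, one_mulVec]
  -- each fvec is a multiple of the corresponding column of Cu
  have hscal : ∀ j : Fin n, ∃ t : ℂ, t ≠ 0 ∧ fvec N (j : ℕ) = t • (fun i => Cu i j) := by
    intro j
    obtain ⟨hA, hW, hne⟩ := fvec_spec hminor hN (j : ℕ) j.isLt
    obtain ⟨c, hc1, hc2⟩ := hrepr (n - (j : ℕ)) (by omega) _ hA
    have hc1' : ∀ i : Fin n, (i : ℕ) < (j : ℕ) → c i = 0 := fun i hi =>
      hc1 i (by omega)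
    have hupper : ∀ t : ℕ, ∀ i : Fin n, n - t ≤ (i : ℕ) → (j : ℕ) < (i : ℕ) → c i = 0 := by
      intro t
      induction t with
      | zero => intro i hi _; exact absurd i.isLt (by omega)
      | succ t ih =>
        intro i hi hji
        rcases Nat.lt_or_ge (i : ℕ) (n - t) with hlt | hge
        · have hcoord : fvec N (j : ℕ) i = 0 := hW i (by omega)
          rw [hc2] at hcoord
          rw [mulVec_eq_sum] at hcoord
          have hsum : ∑ k : Fin n, Cu i k * c k = Cu i i * c i := by
            refine Finset.sum_eq_single i (fun b _ hb => ?_)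
              (fun h => absurd (Finset.mem_univ i) h)
            rcases lt_or_gt_of_ne (Fin.val_ne_of_ne hb) with h1 | h1
            · rw [hCut (show id b < id i from h1), zero_mul]
            · rw [ih b (by omega) (by omega), mul_zero]
          rw [hsum] at hcoord
          rcases mul_eq_zero.mp hcoord with h | h
          · exact absurd h (hdiagCu i)
          · exact h
        · exact ih i hge hji
    have hce : fvec N (j : ℕ) = c j • (fun i => Cu i j) := by
      rw [hc2]
      funext r
      simp only [Pi.smul_apply, smul_eq_mul]
      rw [mulVec_eq_sum]
      rw [Finset.sum_eq_single j (fun b _ hb => ?_) (fun h => absurd (Finset.mem_univ j) h),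
        mul_comm]
      rcases lt_or_gt_of_ne (Fin.val_ne_of_ne hb) with h1 | h1
      · rw [hc1' b h1, mul_zero]
      · rw [hupper n b (by omega) h1, mul_zero]
    refine ⟨c j, fun h0 => ?_, hce⟩
    rw [h0, zero_smul] at hce
    exact hne hce
  -- the scalars for consecutive columns agree
  set T : Fin n → ℂ := fun j => (hscal j).choose with hT
  have hT0 : ∀ j : Fin n, T j ≠ 0 := fun j => (hscal j).choose_spec.1
  have hTe : ∀ j : Fin n, fvec N (j : ℕ) = T j • (fun i => Cu i j) :=
    fun j => (hscal j).choose_spec.2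
  have hcol : ∀ j : Fin n, (fun i => Cu i j) = Cu *ᵥ Pi.single j 1 := by
    intro j
    rw [mulVec_single_one]
    funext i
    rfl
  have hstep : ∀ j : Fin n, ∀ hj : (j : ℕ) + 1 < n, T j = T ⟨(j : ℕ) + 1, hj⟩ := by
    intro j hj
    set j' : Fin n := ⟨(j : ℕ) + 1, hj⟩ with hj'def
    have hval : (j' : ℕ) = (j : ℕ) + 1 := rfl
    obtain ⟨ca, hca1, hca2⟩ := hrepr (n - (j : ℕ) - 2) (by omega) _ (fvec_rel hminor hN hj)
    have e0 : N *ᵥ (fun i => Cu i j) = Cu *ᵥ (fun i => Hu i j) := by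
      rw [hcol j, mulVec_mulVec, hNC, ← mulVec_mulVec, mulVec_single_one]
      rfl
    have lhs : N *ᵥ fvec N (j : ℕ) = Cu *ᵥ ((T j • fun i => Hu i j : Fin n → ℂ)) := by
      rw [hTe j, mulVec_smul, mulVec_smul, e0]
    have rhs : N *ᵥ fvec N (j : ℕ) = Cu *ᵥ (T j' • (Pi.single j' 1 : Fin n → ℂ) + ca) := by
      have hsplit : N *ᵥ fvec N (j : ℕ)
          = fvec N ((j : ℕ) + 1) + (N *ᵥ fvec N (j : ℕ) - fvec N ((j : ℕ) + 1)) := by abel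
      have hj'c : fvec N ((j' : ℕ)) = fvec N ((j : ℕ) + 1) := rfl
      rw [mulVec_add, mulVec_smul, ← hcol j', ← hca2, ← hTe j', hj'c, ← hsplit]
    have heq : ((T j • fun i => Hu i j : Fin n → ℂ)) = T j' • (Pi.single j' 1 : Fin n → ℂ) + ca := by
      have h1 := hinj ((T j • fun i => Hu i j : Fin n → ℂ))
      have h2 := hinj (T j' • (Pi.single j' 1 : Fin n → ℂ) + ca)
      rw [← h1, ← h2, ← lhs, ← rhs]
    have := congrFun heq j'
    simp only [Pi.smul_apply, smul_eq_mul, Pi.add_apply, Pi.single_eq_same] at this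
    rw [hu1 j' j hval, mul_one, hca1 j' (by omega), add_zero, mul_one] at this
    exact this
  have hallT : ∀ m : ℕ, ∀ hm : m < n, T ⟨m, hm⟩ = T ⟨0, hn⟩ := by
    intro m
    induction m with
    | zero => intro hm; rfl
    | succ m ih =>
      intro hm
      have h1 := hstep ⟨m, by omega⟩ (by simpa using hm)
      rw [← ih (by omega)]
      exact h1.symm
  set tau : ℂ := T ⟨0, hn⟩ with htau
  have htau0 : tau ≠ 0 := hT0 _
  have hCuC : Cmat N = tau • Cu := by
    funext i j
    have h1 := congrFun (hTe j) i
    have h2 : T j = tau := by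
      have := hallT (j : ℕ) j.isLt
      simpa using this
    rw [h2] at h1
    simpa [Cmat] using h1
  have hCinv : (Cmat N)⁻¹ = tau⁻¹ • Cu⁻¹ := by
    apply Matrix.inv_eq_left_inv
    rw [hCuC, Matrix.smul_mul, Matrix.mul_smul, smul_smul,
      inv_mul_cancel₀ htau0, Matrix.nonsing_inv_mul _ hdetCu, one_smul]
  have hfinal : (tau⁻¹ • Cu⁻¹) * N * (tau • Cu) = Cu⁻¹ * N * Cu := by
    calc (tau⁻¹ • Cu⁻¹) * N * (tau • Cu)
        = tau • ((tau⁻¹ • Cu⁻¹) * N * Cu) := by rw [Matrix.mul_smul]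
      _ = tau • (tau⁻¹ • (Cu⁻¹ * N * Cu)) := by rw [Matrix.smul_mul, Matrix.smul_mul]
      _ = Cu⁻¹ * N * Cu := by rw [smul_smul, mul_inv_cancel₀ htau0, one_smul]
  rw [hCinv, hCuC, hfinal, hbuCu, hH]

end

end GBNF
open GBNF in
/-- If `N` is nilpotent and all the minors `det((N^{n−k})_{(k,k)})`,
`1 ≤ k ≤ n−1`, are non-zero, then `N` is conjugate under the Borel subgroup `B`
of invertible upper triangular matrices to a unique strictly lower triangular
matrix `H` with all subdiagonal entries equal to `1`. -/
theorem generic_borel_normal_form (n : ℕ) (N : Matrix (Fin n) (Fin n) ℂ)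
    (hN : N ^ n = 0)
    (hminor : ∀ k : ℕ, 1 ≤ k → k < n → ∀ hk : k ≤ n,
      (lastRowsFirstCols n k k hk hk (N ^ (n - k))).det ≠ 0) :
    ∃! H : Matrix (Fin n) (Fin n) ℂ,
      (∀ i j : Fin n, (i : ℕ) ≤ (j : ℕ) → H i j = 0) ∧
      (∀ i j : Fin n, (i : ℕ) = (j : ℕ) + 1 → H i j = 1) ∧
      ∃ b : Matrix (Fin n) (Fin n) ℂ, IsUnit b ∧
        (∀ i j : Fin n, (j : ℕ) < (i : ℕ) → b i j = 0) ∧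
        b * N * b⁻¹ = H := by
  rcases Nat.eq_zero_or_pos n with rfl | hn
  · refine ⟨N, ⟨fun i j _ => i.elim0, fun i j _ => i.elim0, 1, isUnit_one,
      fun i j _ => i.elim0, by simp⟩, fun Hu _ => ?_⟩
    funext i j
    exact i.elim0
  · set H := (Cmat N)⁻¹ * N * Cmat N with hHdef
    have hdet := Cmat_det hminor hN
    refine ⟨H, ⟨?_, ?_, (Cmat N)⁻¹, ?_, ?_, ?_⟩, ?_⟩
    · intro i j hij
      obtain ⟨d, hd0, _, hd⟩ := exists_dvec hminor hN j
      rw [hHdef, H_entries hminor hN j d hd i]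
      exact hd0 i hij
    · intro i j hij
      obtain ⟨d, _, hd1, hd⟩ := exists_dvec hminor hN j
      rw [hHdef, H_entries hminor hN j d hd i]
      exact hd1 i hij
    · rw [Matrix.isUnit_nonsing_inv_iff]
      exact (Matrix.isUnit_iff_isUnit_det _).mpr hdet
    · intro i j hij
      have ht := Cmat_triangular hminor hN
      letI := (Cmat N).invertibleOfIsUnitDet hdet
      exact Matrix.blockTriangular_inv_of_blockTriangular ht (show id j < id i from hij)
    · rw [Matrix.nonsing_inv_nonsing_inv _ hdet]
    · rintro Hu ⟨h0, h1, bu, hbu, hbt, hHu⟩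
      exact uniqueness_aux hminor hN hn Hu bu h0 h1 hbu hbt hHu
end

section
/- Fix block sizes a_1,…,a_s and a'_1,…,a'_t in {1,…,n} with a_1+…+a_s = a'_1+…+a'_t = r, and polynomials P_{i,j} ∈ ℂ[x]. For N in the nilpotent cone of n×n matrices, let N^P be the r×r block matrix whose (i,j) block is the submatrix of P_{i,j}(N) consisting of its last a_i rows and first a'_j columns. Then the function f(N) = det(N^P) is a B-semi-invariant: for all b ∈ B and nilpotent N, f(bNb⁻¹) = χ(b)·f(N), where χ(b) = Π_{i=1}^s (b_{n−a_i+1,n−a_i+1}⋯b_{n,n}) · Π_{j=1}^t (b_{1,1}⋯b_{a'_j,a'_j})^{−1}. -/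
/-!
For upper triangular `b`, the last `a` rows of `b * X` are the lower-right `a × a` corner of `b`
times the last `a` rows of `X`, and the first `a'` columns of `X * b⁻¹` are the first `a'` columns
of `X` times the upper-left `a' × a'` corner of `b⁻¹`. Since `p(b N b⁻¹) = b p(N) b⁻¹`, the block
matrix `(b N b⁻¹)^P` is `N^P` multiplied on the left by the block diagonal matrix of lower-right
corners of `b` and on the right by the block diagonal matrix of upper-left corners of `b⁻¹`.
Each upper-left corner of `b⁻¹` is the inverse of the corresponding corner of `b`, and all these
corners are triangular, so the two block diagonal factors contribute exactly `χ(b)`.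
-/

open Matrix

/-- The determinant of the `r × r` block matrix `N^P` whose `(i,j)` block is
the submatrix of `P i j` evaluated at `N` consisting of its last `a i` rows and
first `a' j` columns; the column index type is transported to the row index
type via a fixed equivalence `e` (which exists since `∑ a i = r = ∑ a' j`). -/
noncomputable def blockDet (n s t : ℕ) (a : Fin s → ℕ) (a' : Fin t → ℕ)
    (ha : ∀ i, a i ≤ n) (ha' : ∀ j, a' j ≤ n)
    (P : Fin s → Fin t → Polynomial ℂ)
    (e : ((j : Fin t) × Fin (a' j)) ≃ ((i : Fin s) × Fin (a i)))
    (N : Matrix (Fin n) (Fin n) ℂ) : ℂ :=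
  Matrix.det (Matrix.of fun (rc cc : (i : Fin s) × Fin (a i)) =>
    (Polynomial.aeval N (P rc.1 (e.symm cc).1))
      ⟨n - a rc.1 + rc.2.val, by have := rc.2.isLt; have := ha rc.1; omega⟩
      ⟨(e.symm cc).2.val, by
        have := ((e.symm cc).2).isLt; have := ha' (e.symm cc).1; omega⟩)

/-- The weight `χ(b) = ∏_i (b_{n−a_i+1,n−a_i+1}⋯b_{n,n}) ·
∏_j (b_{1,1}⋯b_{a'_j,a'_j})⁻¹`. -/
noncomputable def weightChi (n s t : ℕ) (a : Fin s → ℕ) (a' : Fin t → ℕ)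
    (ha : ∀ i, a i ≤ n) (ha' : ∀ j, a' j ≤ n)
    (b : Matrix (Fin n) (Fin n) ℂ) : ℂ :=
  (∏ i : Fin s, ∏ rr : Fin (a i),
      b ⟨n - a i + rr.val, by have := rr.isLt; have := ha i; omega⟩
        ⟨n - a i + rr.val, by have := rr.isLt; have := ha i; omega⟩) *
    (∏ j : Fin t, ∏ c : Fin (a' j),
      b ⟨c.val, by have := c.isLt; have := ha' j; omega⟩
        ⟨c.val, by have := c.isLt; have := ha' j; omega⟩)⁻¹

open Polynomial

theorem Polynomial.aeval_units_conj {R A : Type*} [CommSemiring R] [Semiring A] [Algebra R A]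
    (u : Aˣ) (x : A) (p : R[X]) :
    aeval (u * x * ↑u⁻¹) p = u * aeval x p * ↑u⁻¹ := by
  simpa [ConjAct.units_smul_def] using
    aeval_algHom_apply (MulSemiringAction.toAlgHom R A (ConjAct.toConjAct u)) x p

theorem Matrix.aeval_conj_of_isUnit {m R : Type*} [Fintype m] [DecidableEq m] [CommRing R]
    {b : Matrix m m R} (hb : IsUnit b) (N : Matrix m m R) (p : R[X]) :
    aeval (b * N * b⁻¹) p = b * aeval N p * b⁻¹ := by
  obtain ⟨u, rfl⟩ := hb
  rw [← coe_units_inv, aeval_units_conj]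

def Fin.castLEEnd {m n : ℕ} (h : m ≤ n) (k : Fin m) : Fin n :=
  ⟨n - m + k, by omega⟩

theorem Fin.strictMono_castLEEnd {m n : ℕ} (h : m ≤ n) : StrictMono (Fin.castLEEnd h) :=
  fun k l hkl => by simp only [Fin.castLEEnd, Fin.lt_def] at hkl ⊢; omega

theorem Fin.isUpperSet_range_castLEEnd {m n : ℕ} (h : m ≤ n) :
    IsUpperSet (Set.range (Fin.castLEEnd h)) := by
  rintro _ i hki ⟨k, rfl⟩
  have hi : n - m ≤ i.val := le_trans (Nat.le_add_right _ _) hki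
  exact ⟨⟨i - (n - m), by omega⟩, Fin.ext (by simp only [Fin.castLEEnd]; omega)⟩

theorem Fin.isLowerSet_range_castLE {m n : ℕ} (h : m ≤ n) :
    IsLowerSet (Set.range (Fin.castLE h)) := by
  rintro _ i hik ⟨k, rfl⟩
  exact ⟨⟨i, by simp only [Fin.le_def, Fin.val_castLE] at hik; omega⟩, rfl⟩

namespace Matrix

section Corners

variable {ι α β γ R : Type*} [LinearOrder ι] [Semiring R]

theorem IsUpperTriangular.submatrix_of_strictMono [LinearOrder α] {b : Matrix ι ι R}
    (hb : b.IsUpperTriangular) {f : α → ι} (hf : StrictMono f) :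
    (b.submatrix f f).IsUpperTriangular :=
  fun _ _ h => hb (hf h)

variable [Fintype ι]

theorem submatrix_mul_of_isUpperTriangular_left [Fintype α] {b : Matrix ι ι R}
    (hb : b.IsUpperTriangular) (A : Matrix ι γ R) {f : α → ι} (hf : Function.Injective f)
    (hf' : IsUpperSet (Set.range f)) (g : β → γ) :
    (b * A).submatrix f g = b.submatrix f f * A.submatrix f g := by
  ext x y
  refine (Fintype.sum_of_injective f hf _ _ (fun k hk => ?_) fun _ => rfl).symm
  exact mul_eq_zero_of_left (hb (lt_of_not_ge fun h => hk (hf' h ⟨x, rfl⟩))) _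

theorem submatrix_mul_of_isUpperTriangular_right [Fintype β] {c : Matrix ι ι R}
    (hc : c.IsUpperTriangular) (A : Matrix γ ι R) (f : α → γ) {g : β → ι}
    (hg : Function.Injective g) (hg' : IsLowerSet (Set.range g)) :
    (A * c).submatrix f g = A.submatrix f g * c.submatrix g g := by
  ext x y
  refine (Fintype.sum_of_injective g hg _ _ (fun k hk => ?_) fun _ => rfl).symm
  exact mul_eq_zero_of_right _ (hc (lt_of_not_ge fun h => hk (hg' h ⟨y, rfl⟩)))

theorem submatrix_conj_of_isUpperTriangular [Fintype α] [Fintype β] {b c : Matrix ι ι R}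
    (hb : b.IsUpperTriangular) (hc : c.IsUpperTriangular) (A : Matrix ι ι R) {f : α → ι}
    (hf : Function.Injective f) (hf' : IsUpperSet (Set.range f)) {g : β → ι}
    (hg : Function.Injective g) (hg' : IsLowerSet (Set.range g)) :
    (b * A * c).submatrix f g = b.submatrix f f * A.submatrix f g * c.submatrix g g := by
  rw [submatrix_mul_of_isUpperTriangular_right hc _ _ hg hg',
    submatrix_mul_of_isUpperTriangular_left hb _ hf hf']

theorem det_submatrix_inv_of_isUpperTriangular {K : Type*} [Field K] [DecidableEq ι]
    [Fintype β] [DecidableEq β] {b : Matrix ι ι K} (hb : b.IsUpperTriangular) (hu : IsUnit b)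
    {g : β → ι} (hg : Function.Injective g) (hg' : IsLowerSet (Set.range g)) :
    (b⁻¹.submatrix g g).det = (b.submatrix g g).det⁻¹ := by
  have h : b⁻¹.submatrix g g * b.submatrix g g = 1 := by
    rw [← submatrix_mul_of_isUpperTriangular_right hb _ _ hg hg',
      nonsing_inv_mul _ ((isUnit_iff_isUnit_det b).mp hu), submatrix_one _ hg]
  exact eq_inv_of_mul_eq_one_left (by rw [← det_mul, h, det_one])

end Corners

section SigmaBlocks

variable {ι κ R : Type*} {α α' : ι → Type*} {β β' : κ → Type*}

def sigmaBlocks (M : ∀ i j, Matrix (α i) (β j) R) : Matrix (Σ i, α i) (Σ j, β j) R :=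
  of fun x y => M x.1 y.1 x.2 y.2

variable [NonUnitalNonAssocSemiring R]

theorem blockDiagonal'_mul_sigmaBlocks [Fintype ι] [DecidableEq ι] [∀ i, Fintype (α i)]
    (L : ∀ i, Matrix (α' i) (α i) R) (M : ∀ i j, Matrix (α i) (β j) R) :
    blockDiagonal' L * sigmaBlocks M = sigmaBlocks fun i j => L i * M i j := by
  ext ⟨i, x⟩ ⟨j, y⟩
  simp only [sigmaBlocks, mul_apply, of_apply, Fintype.sum_sigma]
  rw [Finset.sum_eq_single i]
  · simp [blockDiagonal'_apply_eq]
  · intro i' _ hi'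
    simp [blockDiagonal'_apply_ne _ _ _ hi'.symm]
  · simp

theorem sigmaBlocks_mul_blockDiagonal' [Fintype κ] [DecidableEq κ] [∀ j, Fintype (β j)]
    (M : ∀ i j, Matrix (α i) (β j) R) (N : ∀ j, Matrix (β j) (β' j) R) :
    sigmaBlocks M * blockDiagonal' N = sigmaBlocks fun i j => M i j * N j := by
  ext ⟨i, x⟩ ⟨j, y⟩
  simp only [sigmaBlocks, mul_apply, of_apply, Fintype.sum_sigma]
  rw [Finset.sum_eq_single j]
  · simp [blockDiagonal'_apply_eq]
  · intro j' _ hj'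
    simp [blockDiagonal'_apply_ne _ _ _ hj']
  · simp

end SigmaBlocks

theorem det_blockDiagonal' {o R : Type*} [Fintype o] [DecidableEq o] [CommRing R]
    {m : o → Type*} [∀ i, Fintype (m i)] [∀ i, DecidableEq (m i)] (M : ∀ i, Matrix (m i) (m i) R) :
    (blockDiagonal' M).det = ∏ i, (M i).det := by
  let _ : LinearOrder o := LinearOrder.lift' _ (Fintype.equivFin o).injective
  rw [(blockTriangular_blockDiagonal' M).det_fintype]
  refine Finset.prod_congr rfl fun k _ => ?_
  rw [← det_submatrix_equiv_self (Equiv.sigmaSubtype k).symm]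
  congr 1
  ext x y
  exact blockDiagonal'_apply_eq M k x y

theorem det_submatrix_sigmaBlocks_mul_mul {ι κ R : Type*} {α : ι → Type*} {β : κ → Type*}
    [Fintype ι] [Fintype κ] [DecidableEq ι] [DecidableEq κ] [∀ i, Fintype (α i)]
    [∀ i, DecidableEq (α i)] [∀ j, Fintype (β j)] [∀ j, DecidableEq (β j)] [CommRing R]
    (L : ∀ i, Matrix (α i) (α i) R) (M : ∀ i j, Matrix (α i) (β j) R)
    (N : ∀ j, Matrix (β j) (β j) R) (e : (Σ j, β j) ≃ (Σ i, α i)) :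
    ((sigmaBlocks fun i j => L i * M i j * N j).submatrix id e.symm).det =
      (∏ i, (L i).det) * ((sigmaBlocks M).submatrix id e.symm).det * ∏ j, (N j).det := by
  rw [← sigmaBlocks_mul_blockDiagonal', ← blockDiagonal'_mul_sigmaBlocks,
    submatrix_mul _ _ _ e.symm _ e.symm.bijective, submatrix_mul _ _ _ id _ Function.bijective_id,
    det_mul, det_mul, submatrix_id_id, det_submatrix_equiv_self, det_blockDiagonal',
    det_blockDiagonal']

end Matrix

theorem blockDet_eq_det_submatrix_sigmaBlocks (n s t : ℕ) (a : Fin s → ℕ) (a' : Fin t → ℕ)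
    (ha : ∀ i, a i ≤ n) (ha' : ∀ j, a' j ≤ n) (P : Fin s → Fin t → Polynomial ℂ)
    (e : ((j : Fin t) × Fin (a' j)) ≃ ((i : Fin s) × Fin (a i))) (N : Matrix (Fin n) (Fin n) ℂ) :
    blockDet n s t a a' ha ha' P e N =
      ((sigmaBlocks fun i j => (aeval N (P i j)).submatrix (Fin.castLEEnd (ha i))
        (Fin.castLE (ha' j))).submatrix id e.symm).det :=
  rfl

theorem weightChi_eq_prod_det (n s t : ℕ) (a : Fin s → ℕ) (a' : Fin t → ℕ)
    (ha : ∀ i, a i ≤ n) (ha' : ∀ j, a' j ≤ n) {b : Matrix (Fin n) (Fin n) ℂ}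
    (hb : b.IsUpperTriangular) :
    weightChi n s t a a' ha ha' b =
      (∏ i, (b.submatrix (Fin.castLEEnd (ha i)) (Fin.castLEEnd (ha i))).det) *
        (∏ j, (b.submatrix (Fin.castLE (ha' j)) (Fin.castLE (ha' j))).det)⁻¹ := by
  simp only [det_of_isUpperTriangular (hb.submatrix_of_strictMono (Fin.strictMono_castLEEnd _)),
    det_of_isUpperTriangular (hb.submatrix_of_strictMono (Fin.strictMono_castLE _))]
  rfl

theorem blockDet_semi_invariant_general (n s t : ℕ)
    (a : Fin s → ℕ) (a' : Fin t → ℕ)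
    (ha : ∀ i, a i ≤ n)
    (ha' : ∀ j, a' j ≤ n)
    (P : Fin s → Fin t → Polynomial ℂ)
    (e : ((j : Fin t) × Fin (a' j)) ≃ ((i : Fin s) × Fin (a i)))
    (N : Matrix (Fin n) (Fin n) ℂ)
    (b : Matrix (Fin n) (Fin n) ℂ) (hb : IsUnit b)
    (hupper : ∀ i j : Fin n, (j : ℕ) < (i : ℕ) → b i j = 0) :
    blockDet n s t a a' ha ha' P e (b * N * b⁻¹) =
      weightChi n s t a a' ha ha' b * blockDet n s t a a' ha ha' P e N := by
  have htri : b.IsUpperTriangular := hupper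
  have htri_inv : b⁻¹.IsUpperTriangular :=
    have := hb.invertible
    blockTriangular_inv_of_blockTriangular htri
  have hcorner : ∀ i j, (aeval (b * N * b⁻¹) (P i j)).submatrix (Fin.castLEEnd (ha i))
      (Fin.castLE (ha' j)) = b.submatrix (Fin.castLEEnd (ha i)) (Fin.castLEEnd (ha i)) *
        (aeval N (P i j)).submatrix (Fin.castLEEnd (ha i)) (Fin.castLE (ha' j)) *
        b⁻¹.submatrix (Fin.castLE (ha' j)) (Fin.castLE (ha' j)) := fun i j => by
    rw [aeval_conj_of_isUnit hb]
    exact submatrix_conj_of_isUpperTriangular htri htri_inv _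
      (Fin.strictMono_castLEEnd _).injective (Fin.isUpperSet_range_castLEEnd _)
      (Fin.strictMono_castLE _).injective (Fin.isLowerSet_range_castLE _)
  simp only [blockDet_eq_det_submatrix_sigmaBlocks, hcorner, det_submatrix_sigmaBlocks_mul_mul,
    weightChi_eq_prod_det n s t a a' ha ha' htri, det_submatrix_inv_of_isUpperTriangular htri hb
      (Fin.strictMono_castLE _).injective (Fin.isLowerSet_range_castLE _), Finset.prod_inv_distrib]
  ring

/-- The function `N ↦ det(N^P)` on the nilpotent cone is a `B`-semi-invariant
of weight `χ`: `f(bNb⁻¹) = χ(b)·f(N)` for every upper triangular invertible `b`. -/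
theorem blockDet_semi_invariant (n s t r : ℕ)
    (a : Fin s → ℕ) (a' : Fin t → ℕ)
    (ha1 : ∀ i, 1 ≤ a i) (ha : ∀ i, a i ≤ n)
    (ha'1 : ∀ j, 1 ≤ a' j) (ha' : ∀ j, a' j ≤ n)
    (hsum : ∑ i, a i = r) (hsum' : ∑ j, a' j = r)
    (P : Fin s → Fin t → Polynomial ℂ)
    (e : ((j : Fin t) × Fin (a' j)) ≃ ((i : Fin s) × Fin (a i)))
    (N : Matrix (Fin n) (Fin n) ℂ) (hN : N ^ n = 0)
    (b : Matrix (Fin n) (Fin n) ℂ) (hb : IsUnit b)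
    (hupper : ∀ i j : Fin n, (j : ℕ) < (i : ℕ) → b i j = 0) :
    blockDet n s t a a' ha ha' P e (b * N * b⁻¹) =
      weightChi n s t a a' ha ha' b * blockDet n s t a a' ha ha' P e N :=
  blockDet_semi_invariant_general n s t a a' ha ha' P e N b hb hupper
end

section
/- Define on the nilpotent cone N_3 of 3×3 matrices the U-invariants f_{3,1}(N) = N_{3,1}, det_1(N) = N_{2,1}N_{3,2} − N_{2,2}N_{3,1}, f_1(N) = N_{2,1}·det_1(N) + N_{3,1}(N_{2,1}N_{3,3} − N_{3,1}N_{2,3}), f_2(N) = N_{3,2}·det_1(N) + N_{3,1}(N_{1,1}N_{3,2} − N_{1,2}N_{3,1}). Then the relation f_1(N)·f_2(N) = det_1(N)³ holds for every N with N³ = 0. -/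
/-!
A nilpotent matrix has characteristic polynomial `X³`, so its trace, the sum of its principal
`2 × 2` minors and its determinant vanish. Over any commutative ring, `f₁ f₂ - det₁³` is an
explicit combination of these three invariants, with coefficients `N₃₁ det₁²`, `N₃₁² det₁`
and `N₃₁³`.
-/

namespace Matrix

variable {R : Type*} [CommRing R]

def sumPrincipalMinorsTwo (N : Matrix (Fin 3) (Fin 3) R) : R :=
  N 0 0 * N 1 1 - N 0 1 * N 1 0 + (N 0 0 * N 2 2 - N 0 2 * N 2 0) +
    (N 1 1 * N 2 2 - N 1 2 * N 2 1)

theorem two_mul_sumPrincipalMinorsTwo (N : Matrix (Fin 3) (Fin 3) R) :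
    2 * N.sumPrincipalMinorsTwo = N.trace ^ 2 - (N * N).trace := by
  simp only [sumPrincipalMinorsTwo, trace_fin_three, mul_apply, Fin.sum_univ_three]
  ring

theorem det_eq_zero_of_isNilpotent [IsReduced R] {n : Type*} [Fintype n] [DecidableEq n]
    [Nonempty n] {N : Matrix n n R} (hN : IsNilpotent N) : N.det = 0 := by
  obtain ⟨k, hk⟩ := hN
  exact IsReduced.eq_zero _ ⟨k, by rw [← det_pow, hk, det_zero]⟩

theorem sumPrincipalMinorsTwo_eq_zero_of_isNilpotent [NoZeroDivisors R] [NeZero (2 : R)]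
    {N : Matrix (Fin 3) (Fin 3) R} (hN : IsNilpotent N) : N.sumPrincipalMinorsTwo = 0 := by
  have hsq : IsNilpotent (N * N) := (Commute.refl N).isNilpotent_mul_left hN
  have h2 := two_mul_sumPrincipalMinorsTwo N
  rw [(isNilpotent_trace_of_isNilpotent hN).eq_zero,
    (isNilpotent_trace_of_isNilpotent hsq).eq_zero] at h2
  simpa [two_ne_zero] using h2

theorem toric_relation_of_invariants_eq_zero (N : Matrix (Fin 3) (Fin 3) R)
    (htr : N.trace = 0) (hminors : N.sumPrincipalMinorsTwo = 0) (hdet : N.det = 0) :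
    (N 1 0 * (N 1 0 * N 2 1 - N 1 1 * N 2 0) +
        N 2 0 * (N 1 0 * N 2 2 - N 2 0 * N 1 2)) *
      (N 2 1 * (N 1 0 * N 2 1 - N 1 1 * N 2 0) +
        N 2 0 * (N 0 0 * N 2 1 - N 0 1 * N 2 0)) =
      (N 1 0 * N 2 1 - N 1 1 * N 2 0) ^ 3 := by
  rw [trace_fin_three] at htr
  rw [sumPrincipalMinorsTwo] at hminors
  rw [det_fin_three] at hdet
  linear_combination (N 2 0 * (N 1 0 * N 2 1 - N 1 1 * N 2 0) ^ 2) * htr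
    + (N 2 0 ^ 2 * (N 1 0 * N 2 1 - N 1 1 * N 2 0)) * hminors + N 2 0 ^ 3 * hdet

end Matrix

/-- On the nilpotent cone of 3×3 matrices, with
`f₁(N) = N₂₁·det₁(N) + N₃₁(N₂₁N₃₃ − N₃₁N₂₃)`,
`f₂(N) = N₃₂·det₁(N) + N₃₁(N₁₁N₃₂ − N₁₂N₃₁)` and
`det₁(N) = N₂₁N₃₂ − N₂₂N₃₁`, the relation `f₁·f₂ = det₁³` holds. -/
theorem nilpotent_three_toric_relation (N : Matrix (Fin 3) (Fin 3) ℂ)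
    (hN : N ^ 3 = 0) :
    (N 1 0 * (N 1 0 * N 2 1 - N 1 1 * N 2 0) +
        N 2 0 * (N 1 0 * N 2 2 - N 2 0 * N 1 2)) *
      (N 2 1 * (N 1 0 * N 2 1 - N 1 1 * N 2 0) +
        N 2 0 * (N 0 0 * N 2 1 - N 0 1 * N 2 0)) =
      (N 1 0 * N 2 1 - N 1 1 * N 2 0) ^ 3 := by
  have hnil : IsNilpotent N := ⟨3, hN⟩
  exact N.toric_relation_of_invariants_eq_zero
    (Matrix.isNilpotent_trace_of_isNilpotent hnil).eq_zero
    (Matrix.sumPrincipalMinorsTwo_eq_zero_of_isNilpotent hnil)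
    (Matrix.det_eq_zero_of_isNilpotent hnil)
end

section
/- Let U ⊆ GL_n(ℂ) be the group of upper unitriangular matrices and H_U the set of strictly lower triangular nilpotent matrices H with all subdiagonal entries H_{i+1,i} nonzero. Then distinct elements of H_U lie in distinct U-conjugation orbits: if H, H' ∈ H_U and uHu⁻¹ = H' for some u ∈ U, then H = H'. -/
open Matrix

/-- Distinct strictly lower triangular nilpotent matrices with nonzero
subdiagonal entries lie in distinct orbits under conjugation by the group `U`
of upper unitriangular matrices: if `u H u⁻¹ = H'` with `u ∈ U`, then `H = H'`. -/
theorem unipotent_orbits_separated (n : ℕ) (H H' : Matrix (Fin n) (Fin n) ℂ)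
    (hH : ∀ i j : Fin n, (i : ℕ) ≤ (j : ℕ) → H i j = 0)
    (hH' : ∀ i j : Fin n, (i : ℕ) ≤ (j : ℕ) → H' i j = 0)
    (hsub : ∀ i j : Fin n, (i : ℕ) = (j : ℕ) + 1 → H i j ≠ 0)
    (hsub' : ∀ i j : Fin n, (i : ℕ) = (j : ℕ) + 1 → H' i j ≠ 0)
    (u : Matrix (Fin n) (Fin n) ℂ)
    (hu1 : ∀ i : Fin n, u i i = 1)
    (hu0 : ∀ i j : Fin n, (j : ℕ) < (i : ℕ) → u i j = 0)
    (hconj : u * H * u⁻¹ = H') : H = H' := by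
  have hdet : u.det = 1 := by
    rw [Matrix.det_of_upperTriangular (fun i j h => hu0 i j h)]
    simp [hu1]
  have hdet' : IsUnit u.det := by rw [hdet]; exact isUnit_one
  have hE : u * H = H' * u := by
    have h2 := congrArg (fun M => M * u) hconj
    simpa [Matrix.mul_assoc, Matrix.nonsing_inv_mul u hdet'] using h2
  -- Key claim: all strictly upper entries of `u` vanish.
  have key : ∀ N : ℕ, ∀ i k : Fin n, (i : ℕ) * n + (n - (k : ℕ)) = N →
      (i : ℕ) < (k : ℕ) → u i k = 0 := by
    intro N
    induction N using Nat.strong_induction_on with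
    | _ N IH =>
      intro i k hN hik
      -- Row equation: for any column j with i ≤ j, the i-th row of u*H pairs to 0.
      have hsum : ∀ j : Fin n, (i : ℕ) ≤ (j : ℕ) → ∑ m, u i m * H m j = 0 := by
        intro j hij
        have h1 : (u * H) i j = (H' * u) i j := by rw [hE]
        rw [Matrix.mul_apply, Matrix.mul_apply] at h1
        rw [h1]
        apply Finset.sum_eq_zero
        intro m _
        by_cases hm : (i : ℕ) ≤ (m : ℕ)
        · rw [hH' i m hm, zero_mul]
        · push_neg at hm
          have hmj : (m : ℕ) < (j : ℕ) := lt_of_lt_of_le hm hij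
          have hmeas : (m : ℕ) * n + (n - (j : ℕ)) < N := by
            rw [← hN]
            have h1' : (m : ℕ) * n + (n - (j : ℕ)) ≤ (m : ℕ) * n + n :=
              Nat.add_le_add_left (Nat.sub_le _ _) _
            have h2' : (m : ℕ) * n + n ≤ (i : ℕ) * n := by
              have := mul_le_mul_left (Nat.succ_le_of_lt hm) n
              rwa [Nat.succ_mul] at this
            have h3' : (i : ℕ) * n < (i : ℕ) * n + (n - (k : ℕ)) :=
              Nat.lt_add_of_pos_right (Nat.sub_pos_of_lt k.isLt)
            exact lt_of_le_of_lt (le_trans h1' h2') h3'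
          rw [IH _ hmeas m j rfl hmj, mul_zero]
      have hk1 : 1 ≤ (k : ℕ) := by omega
      have hj0lt : (k : ℕ) - 1 < n := by have := k.isLt; omega
      set j0 : Fin n := ⟨(k : ℕ) - 1, hj0lt⟩ with hj0
      have hij0 : (i : ℕ) ≤ (j0 : ℕ) := by simp [hj0]; omega
      have hs := hsum j0 hij0
      have hsingle : ∑ m, u i m * H m j0 = u i k * H k j0 := by
        apply Finset.sum_eq_single_of_mem k (Finset.mem_univ k)
        intro m _ hmk
        by_cases hmj : (m : ℕ) ≤ (j0 : ℕ)
        · rw [hH m j0 hmj, mul_zero]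
        · push_neg at hmj
          have hmk' : (k : ℕ) < (m : ℕ) := by
            have : (j0 : ℕ) = (k : ℕ) - 1 := rfl
            have hne : (m : ℕ) ≠ (k : ℕ) := fun h => hmk (Fin.ext h)
            omega
          have hmeas : (i : ℕ) * n + (n - (m : ℕ)) < N := by
            rw [← hN]
            apply Nat.add_lt_add_left
            have := m.isLt
            omega
          rw [IH _ hmeas i m rfl (lt_trans hik hmk'), zero_mul]
      rw [hsingle] at hs
      have hkj0 : H k j0 ≠ 0 := by
        apply hsub k j0
        simp [hj0]; omega
      rcases mul_eq_zero.mp hs with h | h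
      · exact h
      · exact absurd h hkj0
  have hu : u = 1 := by
    ext i j
    rcases lt_trichotomy (i : ℕ) (j : ℕ) with h | h | h
    · rw [key _ i j rfl h, Matrix.one_apply_ne (fun he => by rw [he] at h; omega)]
    · have : i = j := Fin.ext h
      rw [this, hu1 j, Matrix.one_apply_eq]
    · rw [hu0 i j h, Matrix.one_apply_ne (fun he => by rw [he] at h; omega)]
  rw [hu, one_mul, mul_one] at hE
  exact hE
end
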